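/- arXiv:math/0404419 — 2 statements merged into one kernel-verified Lean document; each statement's English description precedes it below -/
import Mathlib

section
/- Let R be a connected locally finite graded k-algebra carrying a coherent family F of right ideals of degree ≤ d, and suppose the set of Hilbert series of nonzero ideals belonging to F has at most s elements. Then the Hilbert series R(z) is rational: there exist polynomials p, q ∈ ℤ[z] of degree ≤ ds with q(0) = 1 such that q(z)·R(z) = p(z) in ℤ[[z]]; moreover, for every I ∈ F there exist polynomials p_I, q_I ∈ ℤ[z] of degree ≤ ds with q_I(0) = 1 such that q_I(z)·I(z) = p_I(z). -/
open MulOpposite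

namespace NCG

variable (k : Type) [Field k] (R : Type) [Ring R] [Algebra k R]

/-- `𝒜` is a connected grading on the `k`-algebra `R`: the graded pieces multiply
correctly, `R` is their internal direct sum, and the degree-zero piece is `k·1`. -/
def IsConnAlg (𝒜 : ℕ → Submodule k R) : Prop :=
  (∀ (i j : ℕ), ∀ x ∈ 𝒜 i, ∀ y ∈ 𝒜 j, x * y ∈ 𝒜 (i + j)) ∧
  DirectSum.IsInternal 𝒜 ∧
  𝒜 0 = Submodule.span k {(1 : R)}

/-- `R` is locally finite: every graded piece is finite-dimensional over `k`. -/
def LocFin (𝒜 : ℕ → Submodule k R) : Prop := ∀ i, FiniteDimensional k (𝒜 i)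

/-- `R` is a finitely generated `k`-algebra. -/
def FinGenAlg : Prop := ∃ s : Finset R, Algebra.adjoin k (s : Set R) = ⊤

/-- extension of the grading to `ℤ` (zero in negative degrees). -/
noncomputable def grZ (𝒜 : ℕ → Submodule k R) : ℤ → Submodule k R :=
  fun j => if 0 ≤ j then 𝒜 j.toNat else ⊥

/-- the augmentation ideal `R_{≥1}`, as a right ideal of `R`. -/
def aug (𝒜 : ℕ → Submodule k R) : Submodule Rᵐᵒᵖ R :=
  Submodule.span Rᵐᵒᵖ (⋃ i : ℕ, ⋃ _ : 1 ≤ i, ((𝒜 i : Set R)))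

variable (M : Type) [AddCommGroup M] [Module Rᵐᵒᵖ M] [Module k M]

/-- `ℳ` makes `M` a graded right module over the graded algebra `(R, 𝒜)`. -/
def IsGradedMod (𝒜 : ℕ → Submodule k R) (ℳ : ℤ → Submodule k M) : Prop :=
  (∀ (i : ℕ) (j : ℤ), ∀ r ∈ 𝒜 i, ∀ x ∈ ℳ j, (op r) • x ∈ ℳ (j + i)) ∧
  DirectSum.IsInternal ℳ

/-- the submodule `N` of `M` is generated in degrees at most `dd`. -/
def GenLE (ℳ : ℤ → Submodule k M) (N : Submodule Rᵐᵒᵖ M) (dd : ℤ) : Prop :=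
  N ≤ Submodule.span Rᵐᵒᵖ {x : M | x ∈ N ∧ ∃ j ≤ dd, x ∈ ℳ j}

/-- the submodule `N` is a graded (homogeneous) submodule of `M`. -/
def IsGradedSub (ℳ : ℤ → Submodule k M) (N : Submodule Rᵐᵒᵖ M) : Prop :=
  N ≤ Submodule.span Rᵐᵒᵖ {x : M | x ∈ N ∧ ∃ j : ℤ, x ∈ ℳ j}

/-- the Hilbert series of a submodule `N` of `M`, as its coefficient function. -/
noncomputable def hilb (ℳ : ℤ → Submodule k M) [IsScalarTower k Rᵐᵒᵖ M]
    (N : Submodule Rᵐᵒᵖ M) : ℤ → ℕ :=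
  fun j => Module.finrank k ↥(ℳ j ⊓ N.restrictScalars k)

/-- the Hilbert series of a right ideal of `R`, as its coefficient function. -/
noncomputable def hilbI (𝒜 : ℕ → Submodule k R) (I : Submodule Rᵐᵒᵖ R) : ℕ → ℕ :=
  fun j => Module.finrank k ↥(𝒜 j ⊓ I.restrictScalars k)

/-- the Hilbert series of the algebra `R`, as its coefficient function. -/
noncomputable def hilbA (𝒜 : ℕ → Submodule k R) : ℕ → ℕ :=
  fun j => Module.finrank k ↥(𝒜 j)

/-- `v` is a solution of the homogeneous linear equation `a₁x₁ + ⋯ + aₙxₙ = 0`. -/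
def IsSol {n : ℕ} (a : Fin n → M) (v : Fin n → R) : Prop :=
  ∑ i, op (v i) • a i = 0

/-- `w` is a homogeneous element of degree `j` of the free module `⊕ᵢ R(-dg i)`. -/
def FreeHomog (𝒜 : ℕ → Submodule k R) {n : ℕ} (dg : Fin n → ℤ)
    (w : Fin n → R) (j : ℤ) : Prop :=
  ∀ i, w i ∈ grZ k R 𝒜 (j - dg i)

/-- The module of solutions of the equation with homogeneous coefficients `a` (of
degrees `dg`) is generated in degrees at most `D`: every solution is an `R`-linear
combination of homogeneous solutions of degree at most `D`. -/
def SolGenLE (𝒜 : ℕ → Submodule k R) {n : ℕ} (a : Fin n → M) (dg : Fin n → ℤ)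
    (D : ℤ) : Prop :=
  ∀ v : Fin n → R, IsSol R M a v →
    v ∈ Submodule.span Rᵐᵒᵖ
      {w : Fin n → R | IsSol R M a w ∧ ∃ j ≤ D, FreeHomog k R 𝒜 dg w j}

/-- The module of solutions of the equation with coefficients `a` is generated by the
(finitely many) solutions `h`. -/
def SolSpanBy {n : ℕ} (a : Fin n → M) {m : ℕ} (h : Fin m → (Fin n → R)) : Prop :=
  (∀ j, IsSol R M a (h j)) ∧
  ∀ v : Fin n → R, IsSol R M a v → v ∈ Submodule.span Rᵐᵒᵖ (Set.range h)

/-- `D` witnesses the effective coherence of the graded module `M`. -/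
def WitnessEC (𝒜 : ℕ → Submodule k R) (ℳ : ℤ → Submodule k M) (D : ℕ → ℕ) : Prop :=
  (∀ d, d ≤ D d) ∧
  ∀ (d n : ℕ) (a : Fin n → M) (dg : Fin n → ℤ),
    (∀ i, a i ∈ ℳ (dg i)) → (∀ i, dg i ≤ (d : ℤ)) →
    SolGenLE k R M 𝒜 a dg ((D d : ℕ) : ℤ)

/-- the graded module `M` is effectively coherent. -/
def EffCoh (𝒜 : ℕ → Submodule k R) (ℳ : ℤ → Submodule k M) : Prop :=
  ∃ D : ℕ → ℕ, WitnessEC k R M 𝒜 ℳ D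

/-- the algebra `R` is effectively coherent (as a right module over itself). -/
noncomputable def EffCohAlg (𝒜 : ℕ → Submodule k R) : Prop :=
  EffCoh k R R 𝒜 (grZ k R 𝒜)

/-- `M` is a finitely presented graded right `R`-module. -/
def ModFinPres (𝒜 : ℕ → Submodule k R) (ℳ : ℤ → Submodule k M) : Prop :=
  ∃ (t : ℕ) (b : Fin t → M) (db : Fin t → ℤ),
    (∀ i, b i ∈ ℳ (db i)) ∧ Submodule.span Rᵐᵒᵖ (Set.range b) = ⊤ ∧
    ∃ (m : ℕ) (h : Fin m → (Fin t → R)) (e : Fin m → ℤ),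
      (∀ j, FreeHomog k R 𝒜 db (h j) (e j)) ∧ SolSpanBy R M b h

/-- `R` is a finitely presented algebra: there is an exact sequence
`F₂ → F₁ → R → k_R → 0` of graded right modules with `F₁, F₂` finite graded free. -/
def AlgFinPres (𝒜 : ℕ → Submodule k R) : Prop :=
  ∃ (n : ℕ) (g : Fin n → R) (dg : Fin n → ℕ),
    (∀ i, g i ∈ 𝒜 (dg i)) ∧
    Submodule.span Rᵐᵒᵖ (Set.range g) = aug k R 𝒜 ∧
    ∃ (m : ℕ) (h : Fin m → (Fin n → R)) (e : Fin m → ℤ),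
      (∀ j, FreeHomog k R 𝒜 (fun i => (dg i : ℤ)) (h j) (e j)) ∧
      SolSpanBy R R g h

/-- `R` admits an exact sequence `F₃ → F₂ → F₁ → R → k_R → 0` of graded right modules
with all `Fᵢ` finite graded free (finitely presented with `dim Tor₃ < ∞`). -/
def AlgFinPres3 (𝒜 : ℕ → Submodule k R) : Prop :=
  ∃ (n : ℕ) (g : Fin n → R) (dg : Fin n → ℕ),
    (∀ i, g i ∈ 𝒜 (dg i)) ∧
    Submodule.span Rᵐᵒᵖ (Set.range g) = aug k R 𝒜 ∧
    ∃ (m : ℕ) (h : Fin m → (Fin n → R)) (e : Fin m → ℤ),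
      (∀ j, FreeHomog k R 𝒜 (fun i => (dg i : ℤ)) (h j) (e j)) ∧
      SolSpanBy R R g h ∧
      ∃ (p : ℕ) (u : Fin p → (Fin m → R)) (f : Fin p → ℤ),
        (∀ l, FreeHomog k R 𝒜 e (u l) (f l)) ∧
        SolSpanBy R (Fin n → R) h u

/-- membership in the class `D(n,a,b,c)`: there is an exact sequence
`F₃ → F₂ → F₁ → R → k_R → 0` with `F₁` of rank at most `n` and basis in degrees `≤ a`,
`F₂` with basis in degrees `≤ b` and `F₃` with basis in degrees `≤ c`. -/
def InDClass (𝒜 : ℕ → Submodule k R) (n a b c : ℕ) : Prop :=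
  ∃ (n' : ℕ), n' ≤ n ∧ ∃ (g : Fin n' → R) (dg : Fin n' → ℕ),
    (∀ i, dg i ≤ a) ∧ (∀ i, g i ∈ 𝒜 (dg i)) ∧
    Submodule.span Rᵐᵒᵖ (Set.range g) = aug k R 𝒜 ∧
    ∃ (m : ℕ) (h : Fin m → (Fin n' → R)) (e : Fin m → ℤ),
      (∀ j, e j ≤ (b : ℤ)) ∧
      (∀ j, FreeHomog k R 𝒜 (fun i => (dg i : ℤ)) (h j) (e j)) ∧
      SolSpanBy R R g h ∧
      SolGenLE k R (Fin n' → R) 𝒜 h e (c : ℤ)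

/-- the right ideal `I` has a finite homogeneous generating family in degrees `≤ d`. -/
def FinGenLE (𝒜 : ℕ → Submodule k R) (I : Submodule Rᵐᵒᵖ R) (d : ℕ) : Prop :=
  ∃ (n : ℕ) (x : Fin n → R) (dx : Fin n → ℕ),
    (∀ i, dx i ≤ d) ∧ (∀ i, x i ∈ 𝒜 (dx i)) ∧
    Submodule.span Rᵐᵒᵖ (Set.range x) = I

/-- lexicographic strict order on `ℕ`-indexed coefficient functions: `f <_lex g`. -/
def LexLtN (f g : ℕ → ℕ) : Prop := ∃ q, (∀ i < q, f i = g i) ∧ f q < g q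

/-- lexicographic strict order on `ℤ`-indexed coefficient functions: `f <_lex g`. -/
def LexLtZ (f g : ℤ → ℕ) : Prop := ∃ q, (∀ i < q, f i = g i) ∧ f q < g q

/-- the right annihilator ideal of an element `a : R`. -/
def rAnn (a : R) : Submodule Rᵐᵒᵖ R where
  carrier := {r : R | a * r = 0}
  add_mem' := by
    intro x y hx hy
    simp only [Set.mem_setOf_eq] at *
    rw [mul_add, hx, hy, add_zero]
  zero_mem' := by simp
  smul_mem' := by
    intro c x hx
    simp only [Set.mem_setOf_eq] at *
    rw [← op_unop c, op_smul_eq_mul, ← mul_assoc, hx, zero_mul]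

/-- the colon right ideal `(x : J) = { a ∈ R | x·a ∈ J }`. -/
def colon (x : R) (J : Submodule Rᵐᵒᵖ R) : Submodule Rᵐᵒᵖ R where
  carrier := {a : R | x * a ∈ J}
  add_mem' := by
    intro p q hp hq
    simp only [Set.mem_setOf_eq] at *
    rw [mul_add]; exact J.add_mem hp hq
  zero_mem' := by simp
  smul_mem' := by
    intro c p hp
    simp only [Set.mem_setOf_eq] at *
    rw [← op_unop c, op_smul_eq_mul, ← mul_assoc]
    exact J.smul_mem (op (unop c)) hp

/-- `F` is a coherent family of right ideals of `R`. -/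
def IsCohFam (𝒜 : ℕ → Submodule k R) (F : Set (Submodule Rᵐᵒᵖ R)) : Prop :=
  (∀ I ∈ F, I.FG ∧ IsGradedSub k R R (grZ k R 𝒜) I) ∧
  (⊥ : Submodule Rᵐᵒᵖ R) ∈ F ∧ aug k R 𝒜 ∈ F ∧
  ∀ I ∈ F, I ≠ ⊥ → ∃ J ∈ F, J ≠ I ∧ ∃ x : R, (∃ dx : ℕ, x ∈ 𝒜 dx) ∧ x ∈ I ∧
    I = J ⊔ Submodule.span Rᵐᵒᵖ {x} ∧
    (∀ dI : ℤ, GenLE k R R (grZ k R 𝒜) I dI → GenLE k R R (grZ k R 𝒜) J dI) ∧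
    colon R x J ∈ F

/-- the family `F` of ideals has degree at most `d`. -/
def CohFamDegLE (𝒜 : ℕ → Submodule k R) (F : Set (Submodule Rᵐᵒᵖ R)) (d : ℕ) : Prop :=
  ∀ I ∈ F, GenLE k R R (grZ k R 𝒜) I (d : ℤ)

/-- the right ideal `I` is finitely presented as a graded module. -/
def IdealFinPres (𝒜 : ℕ → Submodule k R) (I : Submodule Rᵐᵒᵖ R) : Prop :=
  ∃ (n : ℕ) (x : Fin n → R) (dx : Fin n → ℕ),
    (∀ i, x i ∈ 𝒜 (dx i)) ∧ Submodule.span Rᵐᵒᵖ (Set.range x) = I ∧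
    ∃ (m : ℕ) (h : Fin m → (Fin n → R)) (e : Fin m → ℤ),
      (∀ j, FreeHomog k R 𝒜 (fun i => (dx i : ℤ)) (h j) (e j)) ∧
      SolSpanBy R R x h

/-- `R` is graded right coherent: every finitely generated homogeneous right ideal
is finitely presented as a graded module. -/
def GradedCoherent (𝒜 : ℕ → Submodule k R) : Prop :=
  ∀ I : Submodule Rᵐᵒᵖ R, I.FG → IsGradedSub k R R (grZ k R 𝒜) I →
    IdealFinPres k R 𝒜 I

/-- a free resolution of the right ideal `I` by finite graded free modules whose
bases at level `i` sit in degrees at most `B i`. -/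
def FreeResBdd (𝒜 : ℕ → Submodule k R) (I : Submodule Rᵐᵒᵖ R) (B : ℕ → ℤ) : Prop :=
  ∃ (r : ℕ → ℕ) (dgs : (i : ℕ) → Fin (r i) → ℤ)
    (g0 : Fin (r 0) → R)
    (g : (i : ℕ) → Fin (r (i + 1)) → (Fin (r i) → R)),
    (∀ l, dgs 0 l ≤ B 0) ∧
    (∀ l, g0 l ∈ grZ k R 𝒜 (dgs 0 l)) ∧
    Submodule.span Rᵐᵒᵖ (Set.range g0) = I ∧
    (∀ (i : ℕ) (l : Fin (r (i + 1))), dgs (i + 1) l ≤ B (i + 1)) ∧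
    (∀ (i : ℕ) (l : Fin (r (i + 1))), FreeHomog k R 𝒜 (dgs i) (g i l) (dgs (i + 1) l)) ∧
    SolSpanBy R R g0 (g 0) ∧
    (∀ i : ℕ, SolSpanBy R (Fin (r i) → R) (g i) (g (i + 1)))

/-- the Artin–Zhang property for a graded module `M`. -/
def ArtinZhang (ℳ : ℤ → Submodule k M) [IsScalarTower k Rᵐᵒᵖ M] : Prop :=
  ∀ h : ℤ → ℕ, ∃ d : ℤ, 0 < d ∧
    (∀ L : Submodule Rᵐᵒᵖ M, L.FG → hilb k R M ℳ L = h → GenLE k R M ℳ L d) ∧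
    (∀ L : Submodule Rᵐᵒᵖ M, GenLE k R M ℳ L d →
      (∀ j ≤ d, hilb k R M ℳ L j = h j) → hilb k R M ℳ L = h)

/-- `M` is effective for series: for each `d`, only finitely many Hilbert series of
submodules generated in degrees `≤ d`. -/
def EffForSeries (ℳ : ℤ → Submodule k M) [IsScalarTower k Rᵐᵒᵖ M] : Prop :=
  ∀ d : ℤ, {h : ℤ → ℕ | ∃ L : Submodule Rᵐᵒᵖ M,
    GenLE k R M ℳ L d ∧ h = hilb k R M ℳ L}.Finite

/-- `M` is effective for generators: the Hilbert series of a finitely generated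
submodule bounds the degrees of its generators. -/
def EffForGen (ℳ : ℤ → Submodule k M) [IsScalarTower k Rᵐᵒᵖ M] : Prop :=
  ∀ h : ℤ → ℕ, ∃ d : ℤ,
    ∀ L : Submodule Rᵐᵒᵖ M, L.FG → hilb k R M ℳ L = h → GenLE k R M ℳ L d

/-- bundled data of a graded `k`-algebra. -/
structure AlgData (k : Type) [Field k] : Type 1 where
  carrier : Type
  [ringStr : Ring carrier]
  [algStr : Algebra k carrier]
  grading : ℕ → Submodule k carrier

attribute [instance] AlgData.ringStr AlgData.algStr

/-- bundled data of a graded right `R`-module. -/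
structure ModData (k R : Type) [Field k] [Ring R] [Algebra k R] : Type 1 where
  carrier : Type
  [acg : AddCommGroup carrier]
  [modR : Module Rᵐᵒᵖ carrier]
  [modk : Module k carrier]
  [tower : IsScalarTower k Rᵐᵒᵖ carrier]
  grading : ℤ → Submodule k carrier

attribute [instance] ModData.acg ModData.modR ModData.modk ModData.tower


section Aux
set_option maxHeartbeats 1000000
set_option synthInstance.maxHeartbeats 400000

variable {k R : Type} [Field k] [Ring R] [Algebra k R] (𝒜 : ℕ → Submodule k R)

theorem comp_mem [GradedRing 𝒜] {I : Submodule Rᵐᵒᵖ R}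
    (hI : IsGradedSub k R R (grZ k R 𝒜) I) {y : R} (hy : y ∈ I) (n : ℕ) :
    (DirectSum.decompose 𝒜 y n : R) ∈ I := by
  classical
  let T : Submodule Rᵐᵒᵖ R :=
    { carrier := {y : R | ∀ n : ℕ, (DirectSum.decompose 𝒜 y n : R) ∈ I}
      add_mem' := by
        intro a b ha hb n
        simp only [Set.mem_setOf_eq, DirectSum.decompose_add, DirectSum.add_apply,
          Submodule.coe_add] at *
        exact I.add_mem (ha n) (hb n)
      zero_mem' := by
        intro n
        simp only [Set.mem_setOf_eq, DirectSum.decompose_zero, DirectSum.zero_apply,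
          ZeroMemClass.coe_zero]
        exact I.zero_mem
      smul_mem' := by
        intro c y hy
        have hcy : c • y = y * (unop c) := rfl
        show ∀ m : ℕ, (DirectSum.decompose 𝒜 (c • y) m : R) ∈ I
        intro m
        rw [hcy, DirectSum.decompose_mul, DirectSum.coe_mul_apply]
        refine Submodule.sum_mem I ?_
        intro ij _
        have : (DirectSum.decompose 𝒜 y ij.1 : R) * (DirectSum.decompose 𝒜 (unop c) ij.2 : R)
            = op ((DirectSum.decompose 𝒜 (unop c) ij.2 : R)) • (DirectSum.decompose 𝒜 y ij.1 : R) := by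
          rw [op_smul_eq_mul]
        rw [this]
        exact I.smul_mem _ (hy ij.1) }
  have hT : I ≤ T := by
    refine le_trans hI (Submodule.span_le.mpr ?_)
    rintro x ⟨hxI, j, hxj⟩
    intro m
    by_cases h0 : 0 ≤ j
    · have hx' : x ∈ 𝒜 j.toNat := by
        simpa only [grZ, if_pos h0] using hxj
      by_cases hm : j.toNat = m
      · rw [← hm, DirectSum.decompose_of_mem_same 𝒜 hx']; exact hxI
      · rw [DirectSum.decompose_of_mem_ne 𝒜 hx' hm]; exact I.zero_mem
    · have : x = 0 := by simpa only [grZ, if_neg h0, Submodule.mem_bot] using hxj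
      subst this
      simp only [DirectSum.decompose_zero, DirectSum.zero_apply, ZeroMemClass.coe_zero]
      exact I.zero_mem
  exact hT hy n

theorem le_of_homog {I : Submodule Rᵐᵒᵖ R} (hI : IsGradedSub k R R (grZ k R 𝒜) I)
    {J : Submodule Rᵐᵒᵖ R} (h : ∀ n : ℕ, ∀ y ∈ 𝒜 n, y ∈ I → y ∈ J) : I ≤ J := by
  refine le_trans hI (Submodule.span_le.mpr ?_)
  rintro y ⟨hyI, j, hyj⟩
  by_cases h0 : 0 ≤ j
  · exact h j.toNat y (by simpa only [grZ, if_pos h0] using hyj) hyI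
  · have : y = 0 := by simpa only [grZ, if_neg h0, Submodule.mem_bot] using hyj
    subst this; exact J.zero_mem

theorem hilbI_bot : hilbI k R 𝒜 (⊥ : Submodule Rᵐᵒᵖ R) = fun _ => 0 := by
  funext n
  simp only [hilbI]
  rw [Submodule.restrictScalars_bot, inf_bot_eq]
  exact finrank_bot k R

theorem lexlt_of_lt (hlf : LocFin k R 𝒜) {I J : Submodule Rᵐᵒᵖ R}
    (hI : IsGradedSub k R R (grZ k R 𝒜) I) (hle : J ≤ I) (hne : J ≠ I) :
    LexLtN (hilbI k R 𝒜 J) (hilbI k R 𝒜 I) := by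
  classical
  have hres : J.restrictScalars k ≤ I.restrictScalars k := fun z hz => hle hz
  have hmono : ∀ n, hilbI k R 𝒜 J n ≤ hilbI k R 𝒜 I n := by
    intro n
    haveI := hlf n
    haveI : FiniteDimensional k ↥(𝒜 n ⊓ I.restrictScalars k) :=
      Submodule.finiteDimensional_of_le inf_le_left
    exact Submodule.finrank_mono (inf_le_inf_left _ hres)
  have hne' : ∃ n : ℕ, hilbI k R 𝒜 J n ≠ hilbI k R 𝒜 I n := by
    by_contra hcon
    push_neg at hcon
    apply hne
    refine le_antisymm hle (le_of_homog 𝒜 hI ?_)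
    intro n y hyn hyI
    haveI := hlf n
    haveI : FiniteDimensional k ↥(𝒜 n ⊓ I.restrictScalars k) :=
      Submodule.finiteDimensional_of_le inf_le_left
    have heq : 𝒜 n ⊓ J.restrictScalars k = 𝒜 n ⊓ I.restrictScalars k :=
      Submodule.eq_of_le_of_finrank_le (inf_le_inf_left _ hres) (hcon n).ge
    have : y ∈ 𝒜 n ⊓ I.restrictScalars k := Submodule.mem_inf.mpr ⟨hyn, hyI⟩
    rw [← heq] at this
    exact (Submodule.mem_inf.mp this).2
  refine ⟨Nat.find hne', fun i hi => ?_, lt_of_le_of_ne (hmono _) (Nat.find_spec hne')⟩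
  have := Nat.find_min hne' hi
  simpa using this

theorem key_rank [GradedRing 𝒜] (hlf : LocFin k R 𝒜)
    {J : Submodule Rᵐᵒᵖ R} {x : R} {e : ℕ} (hx : x ∈ 𝒜 e)
    (hJ : IsGradedSub k R R (grZ k R 𝒜) J) (n : ℕ) :
    (e ≤ n → hilbI k R 𝒜 (J ⊔ Submodule.span Rᵐᵒᵖ {x}) n + hilbI k R 𝒜 (colon R x J) (n - e) =
      hilbI k R 𝒜 J n + hilbA k R 𝒜 (n - e)) ∧
    (¬ e ≤ n → hilbI k R 𝒜 (J ⊔ Submodule.span Rᵐᵒᵖ {x}) n = hilbI k R 𝒜 J n) := by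
  classical
  set I := J ⊔ Submodule.span Rᵐᵒᵖ {x} with hIdef
  have hJle : J ≤ I := le_sup_left
  have hxI : x ∈ I := Submodule.mem_sup_right (Submodule.mem_span_singleton_self x)
  have hdec : ∀ y, y ∈ I → ∃ w r : R, w ∈ J ∧ y = w + x * r := by
    intro y hy
    obtain ⟨w, hw, v, hv, rfl⟩ := Submodule.mem_sup.mp hy
    obtain ⟨aop, rfl⟩ := Submodule.mem_span_singleton.mp hv
    exact ⟨w, unop aop, hw, rfl⟩
  have hproj : ∀ y : R, y ∈ 𝒜 n → y ∈ I →
      ∃ w r : R, w ∈ J ∧ w ∈ 𝒜 n ∧ r ∈ 𝒜 (n - e) ∧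
        (¬ e ≤ n → y = w) ∧ (e ≤ n → y = w + x * r) := by
    intro y hyn hyI
    obtain ⟨w, r, hw, hyeq⟩ := hdec y hyI
    have h1 : (DirectSum.decompose 𝒜 y n : R) =
        (DirectSum.decompose 𝒜 w n : R) + (DirectSum.decompose 𝒜 (x * r) n : R) := by
      rw [hyeq]
      simp only [DirectSum.decompose_add, DirectSum.add_apply, Submodule.coe_add]
    rw [DirectSum.decompose_of_mem_same 𝒜 hyn] at h1
    refine ⟨(DirectSum.decompose 𝒜 w n : R), (DirectSum.decompose 𝒜 r (n - e) : R),
      comp_mem 𝒜 hJ hw n, SetLike.coe_mem _, SetLike.coe_mem _, ?_, ?_⟩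
    · intro hne
      rwa [DirectSum.coe_decompose_mul_of_left_mem_of_not_le 𝒜 hx hne, add_zero] at h1
    · intro hle
      rwa [DirectSum.coe_decompose_mul_of_left_mem_of_le 𝒜 hx hle] at h1
  constructor
  · intro hle
    set m := n - e with hm
    have hem : e + m = n := by omega
    let ψ : ↥(𝒜 m) →ₗ[k] R := (LinearMap.mulLeft k x).comp (𝒜 m).subtype
    have hψ : ∀ z : ↥(𝒜 m), ψ z = x * (z : R) := fun z => rfl
    set W := LinearMap.range ψ with hW
    have hWI : W ≤ 𝒜 n ⊓ I.restrictScalars k := by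
      rintro _ ⟨z, rfl⟩
      refine Submodule.mem_inf.mpr ⟨?_, ?_⟩
      · have h2 := SetLike.GradedMul.mul_mem hx z.2
        rw [hψ]
        rwa [hem] at h2
      · show ψ z ∈ I
        rw [hψ, ← op_smul_eq_mul]
        exact I.smul_mem _ hxI
    have hsup : 𝒜 n ⊓ I.restrictScalars k = (𝒜 n ⊓ J.restrictScalars k) ⊔ W := by
      refine le_antisymm ?_ (sup_le (inf_le_inf_left _ fun z hz => hJle hz) hWI)
      rintro y hy
      obtain ⟨hy1, hy2⟩ := Submodule.mem_inf.mp hy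
      obtain ⟨w, r, hwJ, hwn, hrm, _, hhigh⟩ := hproj y hy1 hy2
      exact Submodule.mem_sup.mpr ⟨w, Submodule.mem_inf.mpr ⟨hwn, hwJ⟩, x * r,
        ⟨⟨r, hrm⟩, rfl⟩, (hhigh hle).symm⟩
    let C' : Submodule k ↥(𝒜 m) :=
      Submodule.comap (𝒜 m).subtype ((colon R x J).restrictScalars k)
    have hCmem : ∀ z : ↥(𝒜 m), z ∈ C' ↔ x * (z : R) ∈ J := fun z => Iff.rfl
    have hker : LinearMap.ker ψ ≤ C' := by
      intro z hz
      rw [LinearMap.mem_ker, hψ] at hz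
      rw [hCmem, hz]
      exact J.zero_mem
    have hinf : (𝒜 n ⊓ J.restrictScalars k) ⊓ W = Submodule.map ψ C' := by
      refine le_antisymm ?_ ?_
      · rintro y hy
        obtain ⟨hy1, z, rfl⟩ := Submodule.mem_inf.mp hy
        exact ⟨z, (hCmem z).mpr ((Submodule.mem_inf.mp hy1).2), rfl⟩
      · rintro _ ⟨z, hz, rfl⟩
        refine Submodule.mem_inf.mpr ⟨Submodule.mem_inf.mpr ⟨?_, (hCmem z).mp hz⟩, ⟨z, rfl⟩⟩
        have h2 := SetLike.GradedMul.mul_mem hx z.2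
        rw [hψ]
        rwa [hem] at h2
    haveI : FiniteDimensional k ↥(𝒜 m) := hlf m
    haveI : FiniteDimensional k ↥(𝒜 n) := hlf n
    haveI : FiniteDimensional k ↥(𝒜 n ⊓ J.restrictScalars k) :=
      Submodule.finiteDimensional_of_le inf_le_left
    haveI : FiniteDimensional k ↥W :=
      Submodule.finiteDimensional_of_le (le_trans hWI inf_le_left)
    have h1 := Submodule.finrank_sup_add_finrank_inf_eq (𝒜 n ⊓ J.restrictScalars k) W
    have h2 := LinearMap.finrank_range_add_finrank_ker ψ
    have h3 := LinearMap.finrank_range_add_finrank_ker (V := ↥C') (ψ.domRestrict C')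
    rw [LinearMap.range_domRestrict, LinearMap.ker_domRestrict] at h3
    have h4 : Module.finrank k ↥(Submodule.comap C'.subtype (LinearMap.ker ψ)) =
        Module.finrank k ↥(LinearMap.ker ψ) :=
      (Submodule.comapSubtypeEquivOfLe hker).finrank_eq
    have h5 : Module.finrank k ↥C' = hilbI k R 𝒜 (colon R x J) m := by
      have hC2 : C' = Submodule.comap (𝒜 m).subtype (𝒜 m ⊓ (colon R x J).restrictScalars k) := by
        rw [Submodule.comap_inf, Submodule.comap_subtype_self, top_inf_eq]
      rw [hC2]
      exact (Submodule.comapSubtypeEquivOfLe inf_le_left).finrank_eq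
    have e1 : hilbI k R 𝒜 I n + Module.finrank k ↥((𝒜 n ⊓ J.restrictScalars k) ⊓ W) =
        hilbI k R 𝒜 J n + Module.finrank k ↥W := by
      show Module.finrank k ↥(𝒜 n ⊓ I.restrictScalars k) + _ = _
      rw [hsup]
      exact h1
    have e2 : Module.finrank k ↥((𝒜 n ⊓ J.restrictScalars k) ⊓ W) +
        Module.finrank k ↥(LinearMap.ker ψ) = hilbI k R 𝒜 (colon R x J) m := by
      rw [hinf, ← h5, ← h3, h4]
    have e3 : Module.finrank k ↥W + Module.finrank k ↥(LinearMap.ker ψ) = hilbA k R 𝒜 m := h2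
    omega
  · intro hne
    have heq : 𝒜 n ⊓ I.restrictScalars k = 𝒜 n ⊓ J.restrictScalars k := by
      refine le_antisymm ?_ (inf_le_inf_left _ fun z hz => hJle hz)
      rintro y hy
      obtain ⟨hy1, hy2⟩ := Submodule.mem_inf.mp hy
      obtain ⟨w, r, hwJ, hwn, _, hlow, _⟩ := hproj y hy1 hy2
      refine Submodule.mem_inf.mpr ⟨hy1, ?_⟩
      show y ∈ J
      rw [hlow hne]
      exact hwJ
    show Module.finrank k ↥(𝒜 n ⊓ I.restrictScalars k) = _
    rw [heq]
    rfl

theorem hilbI_ne_zero (hlf : LocFin k R 𝒜) {I : Submodule Rᵐᵒᵖ R}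
    (hI : IsGradedSub k R R (grZ k R 𝒜) I) (hne : I ≠ ⊥) :
    hilbI k R 𝒜 I ≠ fun _ => 0 := by
  intro h0
  apply hne
  rw [eq_bot_iff]
  refine le_of_homog 𝒜 hI ?_
  intro n y hyn hyI
  haveI := hlf n
  haveI : FiniteDimensional k ↥(𝒜 n ⊓ I.restrictScalars k) :=
    Submodule.finiteDimensional_of_le inf_le_left
  have hb : 𝒜 n ⊓ I.restrictScalars k = ⊥ :=
    Submodule.finrank_eq_zero.mp (congrFun h0 n)
  have hmem : y ∈ (⊥ : Submodule k R) := hb ▸ Submodule.mem_inf.mpr ⟨hyn, hyI⟩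
  simpa using hmem

theorem A_le_aug (n : ℕ) (hn : 1 ≤ n) : 𝒜 n ≤ (aug k R 𝒜).restrictScalars k := by
  intro y hy
  apply Submodule.subset_span
  exact Set.mem_iUnion.mpr ⟨n, Set.mem_iUnion.mpr ⟨hn, hy⟩⟩

theorem aug_decompose_zero [GradedRing 𝒜] {y : R} (hy : y ∈ aug k R 𝒜) :
    (DirectSum.decompose 𝒜 y 0 : R) = 0 := by
  classical
  refine Submodule.span_induction ?_ ?_ ?_ ?_ hy
  · rintro z hz
    simp only [Set.mem_iUnion] at hz
    obtain ⟨i, hi, hzi⟩ := hz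
    exact DirectSum.decompose_of_mem_ne 𝒜 hzi (by omega)
  · simp
  · intro u v _ _ hu hv
    simp only [DirectSum.decompose_add, DirectSum.add_apply, Submodule.coe_add, hu, hv, add_zero]
  · intro c u _ hu
    have hcu : c • u = u * unop c := rfl
    rw [hcu, DirectSum.decompose_mul, DirectSum.coe_mul_apply]
    refine Finset.sum_eq_zero ?_
    rintro ⟨i1, i2⟩ hij
    simp only [Finset.mem_filter, Finset.mem_product, DFinsupp.mem_support_iff] at hij
    obtain ⟨⟨hs1, _⟩, hsum⟩ := hij
    exfalso
    apply hs1
    have hi1 : i1 = 0 := by omega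
    subst hi1
    exact (ZeroMemClass.coe_eq_zero).mp hu

theorem aug_inf_zero [GradedRing 𝒜] : 𝒜 0 ⊓ (aug k R 𝒜).restrictScalars k = ⊥ := by
  rw [eq_bot_iff]
  rintro y hy
  obtain ⟨hy0, hyaug⟩ := Submodule.mem_inf.mp hy
  have hyz : y = 0 := by
    rw [← DirectSum.decompose_of_mem_same 𝒜 hy0]
    exact aug_decompose_zero 𝒜 hyaug
  simp [hyz]

theorem low_comp [GradedRing 𝒜] {J : Submodule Rᵐᵒᵖ R} {x : R} {e : ℕ} (hx : x ∈ 𝒜 e)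
    (hJ : IsGradedSub k R R (grZ k R 𝒜) J) {y : R} {n : ℕ} (hyn : y ∈ 𝒜 n) (hne : ¬ e ≤ n)
    (hyI : y ∈ J ⊔ Submodule.span Rᵐᵒᵖ {x}) : y ∈ J := by
  obtain ⟨w, hw, v, hv, rfl⟩ := Submodule.mem_sup.mp hyI
  obtain ⟨aop, rfl⟩ := Submodule.mem_span_singleton.mp hv
  have hy' : w + aop • x = w + x * unop aop := rfl
  rw [hy'] at hyn ⊢
  have h1 : (DirectSum.decompose 𝒜 (w + x * unop aop) n : R) =
      (DirectSum.decompose 𝒜 w n : R) := by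
    simp only [DirectSum.decompose_add, DirectSum.add_apply, Submodule.coe_add,
      DirectSum.coe_decompose_mul_of_left_mem_of_not_le 𝒜 hx hne, add_zero]
  rw [DirectSum.decompose_of_mem_same 𝒜 hyn] at h1
  rw [h1]
  exact comp_mem 𝒜 hJ hw n

theorem extract [GradedRing 𝒜] (hlf : LocFin k R 𝒜) (h0 : 𝒜 0 = Submodule.span k {(1 : R)})
    {F : Set (Submodule Rᵐᵒᵖ R)} {d : ℕ} (hF : IsCohFam k R 𝒜 F) (hdeg : CohFamDegLE k R 𝒜 F d)
    {I : Submodule Rᵐᵒᵖ R} (hIF : I ∈ F) (hne : I ≠ ⊥) :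
    ∃ J, J ∈ F ∧ ∃ C, C ∈ F ∧ ∃ e, e ≤ d ∧
      LexLtN (hilbI k R 𝒜 J) (hilbI k R 𝒜 I) ∧
      (∀ n : ℕ, (hilbI k R 𝒜 I n : ℤ) = (hilbI k R 𝒜 J n : ℤ) +
        (if e ≤ n then (hilbA k R 𝒜 (n - e) : ℤ) - (hilbI k R 𝒜 C (n - e) : ℤ) else 0)) ∧
      (e = 0 → C = J ∧ hilbI k R 𝒜 I = hilbA k R 𝒜) := by
  classical
  obtain ⟨J, hJF, hJne, x, ⟨e, hx⟩, hxI, hIJ, hGen, hCF⟩ := hF.2.2.2 I hIF hne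
  have hJgr := (hF.1 J hJF).2
  have hIgr := (hF.1 I hIF).2
  have hJle : J ≤ I := hIJ ▸ le_sup_left
  have hxne : x ≠ 0 := by
    rintro rfl
    exact hJne (by rw [hIJ]; simp)
  have hed : e ≤ d := by
    by_contra hlt
    push_neg at hlt
    apply hJne
    refine le_antisymm hJle ?_
    refine le_trans (hdeg I hIF) (Submodule.span_le.mpr ?_)
    rintro y ⟨hyI, j, hjd, hyj⟩
    by_cases hj0 : 0 ≤ j
    · have hyn : y ∈ 𝒜 j.toNat := by simpa only [grZ, if_pos hj0] using hyj
      have hnle : ¬ e ≤ j.toNat := by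
        have : j.toNat ≤ d := by omega
        omega
      exact low_comp 𝒜 hx hJgr hyn hnle (hIJ ▸ hyI)
    · have : y = 0 := by simpa only [grZ, if_neg hj0, Submodule.mem_bot] using hyj
      subst this; exact J.zero_mem
  refine ⟨J, hJF, colon R x J, hCF, e, hed, lexlt_of_lt 𝒜 hlf hIgr hJle hJne, ?_, ?_⟩
  · intro n
    have key := key_rank 𝒜 hlf hx hJgr n
    rw [← hIJ] at key
    by_cases hen : e ≤ n
    · rw [if_pos hen]
      have hcast : (hilbI k R 𝒜 I n : ℤ) + (hilbI k R 𝒜 (colon R x J) (n - e) : ℤ)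
          = (hilbI k R 𝒜 J n : ℤ) + (hilbA k R 𝒜 (n - e) : ℤ) := by
        exact_mod_cast key.1 hen
      omega
    · rw [if_neg hen, add_zero]
      exact_mod_cast key.2 hen
  · intro he0
    subst he0
    rw [h0, Submodule.mem_span_singleton] at hx
    obtain ⟨c, hc⟩ := hx
    have hcne : c ≠ 0 := by rintro rfl; apply hxne; rw [← hc]; simp
    have hxa : x = algebraMap k R c := by rw [← hc, Algebra.algebraMap_eq_smul_one]
    have hsmul : ∀ (a : k) (y : R), y ∈ J → a • y ∈ J := by
      intro a y hy
      have h2 : a • y = op (algebraMap k R a) • y := by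
        rw [op_smul_eq_mul, ← Algebra.commutes, ← Algebra.smul_def]
      rw [h2]; exact J.smul_mem _ hy
    constructor
    · ext a
      show x * a ∈ J ↔ a ∈ J
      constructor
      · intro h
        have h2 : c⁻¹ • (x * a) ∈ J := hsmul _ _ h
        have h3 : c⁻¹ • (x * a) = a := by
          rw [hxa, Algebra.smul_def, ← mul_assoc, ← map_mul, inv_mul_cancel₀ hcne, map_one,
            one_mul]
        rwa [h3] at h2
      · intro h
        have h2 : x * a = c • a := by rw [hxa, Algebra.smul_def]
        rw [h2]; exact hsmul _ _ h
    · have htop : I = ⊤ := by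
        rw [eq_top_iff]
        intro y _
        have h1 : (1 : R) ∈ I := by
          have h2 : (1 : R) = op (algebraMap k R c⁻¹) • x := by
            rw [op_smul_eq_mul, hxa, ← map_mul, mul_inv_cancel₀ hcne, map_one]
          rw [h2]; exact I.smul_mem _ hxI
        have h3 : y = op y • (1 : R) := by rw [op_smul_eq_mul, one_mul]
        rw [h3]; exact I.smul_mem _ h1
      funext n
      rw [htop]
      show Module.finrank k ↥(𝒜 n ⊓ (⊤ : Submodule Rᵐᵒᵖ R).restrictScalars k) = _
      rw [Submodule.restrictScalars_top, inf_top_eq]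
      rfl

theorem det_natDegree_le {t : ℕ} (A : Matrix (Fin t) (Fin t) (Polynomial ℤ)) (d : ℕ)
    (h : ∀ i j, (A i j).natDegree ≤ d) : A.det.natDegree ≤ d * t := by
  rw [Matrix.det_apply']
  refine Polynomial.natDegree_sum_le_of_forall_le _ _ ?_
  intro σ _
  refine (Polynomial.natDegree_mul_le).trans ?_
  rw [show ((Equiv.Perm.sign σ : ℤ) : Polynomial ℤ).natDegree = 0 from
    Polynomial.natDegree_intCast _, zero_add]
  refine (Polynomial.natDegree_prod_le _ _).trans ?_
  calc ∑ i, (A (σ i) i).natDegree ≤ ∑ _i : Fin t, d :=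
        Finset.sum_le_sum fun i _ => h _ _
    _ = d * t := by simp [Finset.sum_const, mul_comm]

theorem coe_mk_poly (p : Polynomial ℤ) :
    (p : PowerSeries ℤ) = PowerSeries.mk (fun i => p.coeff i) := by
  ext n
  simp [Polynomial.coeff_coe]

theorem lexLt_iff (f g : ℕ → ℕ) : LexLtN f g ↔ toLex f < toLex g := Iff.rfl

end Aux

set_option maxHeartbeats 2000000 in
set_option synthInstance.maxHeartbeats 400000 in
/-- if a coherent family of degree at most `d` has at most `s` Hilbert
series of nonzero ideals, then `R(z)` and all `I(z)`, `I ∈ F`, are rational functions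
with numerators and denominators of degree at most `d·s`. -/
theorem statement_16 (k R : Type) [Field k] [Ring R] [Algebra k R]
    (𝒜 : ℕ → Submodule k R) (hconn : IsConnAlg k R 𝒜) (hlf : LocFin k R 𝒜)
    (F : Set (Submodule Rᵐᵒᵖ R)) (d s : ℕ)
    (hF : IsCohFam k R 𝒜 F) (hdeg : CohFamDegLE k R 𝒜 F d)
    (hfin : {h : ℕ → ℕ | ∃ I ∈ F, I ≠ ⊥ ∧ h = hilbI k R 𝒜 I}.Finite)
    (hcard : {h : ℕ → ℕ | ∃ I ∈ F, I ≠ ⊥ ∧ h = hilbI k R 𝒜 I}.ncard ≤ s) :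
    (∃ p q : Polynomial ℤ, p.natDegree ≤ d * s ∧ q.natDegree ≤ d * s ∧
      q.coeff 0 = 1 ∧
      PowerSeries.mk (fun i => q.coeff i) *
        PowerSeries.mk (fun i => (hilbA k R 𝒜 i : ℤ)) =
      PowerSeries.mk (fun i => p.coeff i)) ∧
    (∀ I ∈ F, ∃ p q : Polynomial ℤ, p.natDegree ≤ d * s ∧ q.natDegree ≤ d * s ∧
      q.coeff 0 = 1 ∧
      PowerSeries.mk (fun i => q.coeff i) *
        PowerSeries.mk (fun i => (hilbI k R 𝒜 I i : ℤ)) =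
      PowerSeries.mk (fun i => p.coeff i)) := by
  classical
  obtain ⟨hmul, hint, h00⟩ := hconn
  haveI : SetLike.GradedMonoid 𝒜 :=
    { one_mem := h00 ▸ Submodule.mem_span_singleton_self 1
      mul_mem := fun {i j gi gj} hi hj => hmul i j gi hi gj hj }
  haveI : DirectSum.Decomposition 𝒜 := hint.chooseDecomposition
  haveI : GradedRing 𝒜 := ⟨⟩
  haveI : ∀ i, FiniteDimensional k (𝒜 i) := hlf
  have hconv : ∀ p : Polynomial ℤ,
      PowerSeries.mk (fun i => p.coeff i) = (p : PowerSeries ℤ) := fun p => (coe_mk_poly p).symm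
  by_cases haug : aug k R 𝒜 = ⊥
  · -- degenerate case
    have hAbot : ∀ n, 1 ≤ n → 𝒜 n = ⊥ := by
      intro n hn
      rw [eq_bot_iff]
      refine le_trans (A_le_aug 𝒜 n hn) ?_
      rw [haug, Submodule.restrictScalars_bot]
    have hA0 : ∀ n, 1 ≤ n → hilbA k R 𝒜 n = 0 := by
      intro n hn
      show Module.finrank k ↥(𝒜 n) = 0
      rw [hAbot n hn]
      exact finrank_bot k R
    have hI0 : ∀ (I : Submodule Rᵐᵒᵖ R) (n : ℕ), 1 ≤ n → hilbI k R 𝒜 I n = 0 := by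
      intro I n hn
      show Module.finrank k ↥(𝒜 n ⊓ I.restrictScalars k) = 0
      rw [show 𝒜 n ⊓ I.restrictScalars k = ⊥ by
        rw [eq_bot_iff]; exact le_trans inf_le_left (le_of_eq (hAbot n hn))]
      exact finrank_bot k R
    have key : ∀ f : ℕ → ℕ, (∀ n, 1 ≤ n → f n = 0) →
        (PowerSeries.mk fun i => ((1 : Polynomial ℤ).coeff i)) *
          (PowerSeries.mk fun i => (f i : ℤ)) =
        PowerSeries.mk fun i => ((Polynomial.C (f 0 : ℤ)).coeff i) := by
      intro f hf
      rw [hconv, hconv, Polynomial.coe_one, one_mul]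
      ext n
      simp only [PowerSeries.coeff_mk, Polynomial.coeff_coe, Polynomial.coeff_C]
      cases n with
      | zero => simp
      | succ m => simp [hf (m + 1) (by omega)]
    constructor
    · exact ⟨Polynomial.C ((hilbA k R 𝒜 0 : ℤ)), 1, by simp, by simp, by simp, key _ hA0⟩
    · intro I hI
      exact ⟨Polynomial.C ((hilbI k R 𝒜 I 0 : ℤ)), 1, by simp, by simp, by simp,
        key _ (hI0 I)⟩
  · -- main case
    have hnt : Nontrivial R := by
      by_contra hcon
      rw [not_nontrivial_iff_subsingleton] at hcon
      exact haug (Subsingleton.elim _ _)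
    have hA00 : hilbA k R 𝒜 0 = 1 := by
      show Module.finrank k ↥(𝒜 0) = 1
      rw [h00]
      exact finrank_span_singleton one_ne_zero
    have haug0 : hilbI k R 𝒜 (aug k R 𝒜) 0 = 0 := by
      show Module.finrank k ↥(𝒜 0 ⊓ (aug k R 𝒜).restrictScalars k) = 0
      rw [aug_inf_zero 𝒜]
      exact finrank_bot k R
    have haugn : ∀ n, 1 ≤ n → hilbI k R 𝒜 (aug k R 𝒜) n = hilbA k R 𝒜 n := by
      intro n hn
      show Module.finrank k ↥(𝒜 n ⊓ (aug k R 𝒜).restrictScalars k) = _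
      rw [inf_eq_left.mpr (A_le_aug 𝒜 n hn)]
      rfl
    have hlexaug : LexLtN (hilbI k R 𝒜 (aug k R 𝒜)) (hilbA k R 𝒜) :=
      ⟨0, fun i hi => absurd hi (by omega), by rw [haug0, hA00]; omega⟩
    set Sfin := hfin.toFinset with hSfin
    set S' : Finset (Lex (ℕ → ℕ)) := Sfin.image toLex with hS'
    set t := S'.card with htdef
    have hts : t ≤ s := by
      have h1 : S'.card = Sfin.card := Finset.card_image_of_injective _ toLex.injective
      have h2 : Sfin.card =
          {h : ℕ → ℕ | ∃ I ∈ F, I ≠ ⊥ ∧ h = hilbI k R 𝒜 I}.ncard :=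
        (Set.ncard_eq_toFinset_card _ hfin).symm
      omega
    set emb := S'.orderEmbOfFin (rfl : S'.card = t) with hemb
    set g : Fin t → (ℕ → ℕ) := fun i => ofLex (emb i) with hg
    have hidx : ∀ K : Submodule Rᵐᵒᵖ R, K ∈ F → K ≠ ⊥ →
        ∃ j : Fin t, emb j = toLex (hilbI k R 𝒜 K) := by
      intro K hK hKne
      have h1 : toLex (hilbI k R 𝒜 K) ∈ S' :=
        Finset.mem_image.mpr ⟨hilbI k R 𝒜 K,
          (Set.Finite.mem_toFinset hfin).mpr ⟨K, hK, hKne, rfl⟩, rfl⟩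
      have h2 : (toLex (hilbI k R 𝒜 K) : Lex (ℕ → ℕ)) ∈ Set.range emb := by
        rw [Finset.range_orderEmbOfFin]
        exact h1
      exact Set.mem_range.mp h2
    have hgS : ∀ i : Fin t, ∃ I : Submodule Rᵐᵒᵖ R,
        I ∈ F ∧ I ≠ ⊥ ∧ g i = hilbI k R 𝒜 I := by
      intro i
      have h1 : emb i ∈ S' := S'.orderEmbOfFin_mem rfl i
      obtain ⟨f, hf, hfe⟩ := Finset.mem_image.mp h1
      rw [Set.Finite.mem_toFinset] at hf
      obtain ⟨I, hIF, hIne, rfl⟩ := hf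
      refine ⟨I, hIF, hIne, ?_⟩
      rw [hg]
      simp only
      rw [← hfe]
      rfl
    choose I hIF hIne hgI using hgS
    have hext := fun i => extract 𝒜 hlf h00 hF hdeg (hIF i) (hIne i)
    choose J hJF C hCF e he hlex hrel hdeg0 using hext
    obtain ⟨a, ha⟩ := hidx (aug k R 𝒜) hF.2.2.1 haug
    set Fv : Fin t → PowerSeries ℤ :=
      fun j => PowerSeries.mk (fun n => (g j n : ℤ)) with hFv
    have hFI : ∀ K : Submodule Rᵐᵒᵖ R, ∀ j : Fin t, emb j = toLex (hilbI k R 𝒜 K) →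
        Fv j = PowerSeries.mk (fun n => (hilbI k R 𝒜 K n : ℤ)) := by
      intro K j hj
      have h1 : g j = hilbI k R 𝒜 K := by
        have := congrArg ofLex hj
        simpa [hg] using this
      rw [hFv]
      simp only
      rw [h1]
    set colP : (ℕ → ℕ) → Fin t → Polynomial ℤ :=
      fun f j => if toLex f = emb j then 1 else 0 with hcolP
    have hcolsum : ∀ K : Submodule Rᵐᵒᵖ R, K ∈ F →
        ∑ j, ((colP (hilbI k R 𝒜 K) j : Polynomial ℤ) : PowerSeries ℤ) * Fv j =
          PowerSeries.mk (fun n => (hilbI k R 𝒜 K n : ℤ)) := by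
      intro K hK
      by_cases hKb : K = ⊥
      · subst hKb
        rw [hilbI_bot]
        have hz : ∀ j ∈ Finset.univ, ((colP (fun _ => 0) j : Polynomial ℤ) : PowerSeries ℤ) *
            Fv j = 0 := by
          intro j _
          rw [hcolP]
          simp only
          rw [if_neg, Polynomial.coe_zero, zero_mul]
          intro hcon
          have h2 : (fun _ => 0 : ℕ → ℕ) = g j := by
            have := congrArg ofLex hcon
            simpa [hg] using this
          exact hilbI_ne_zero 𝒜 hlf (hF.1 _ (hIF j)).2 (hIne j) ((hgI j).symm.trans h2.symm)
        rw [Finset.sum_congr rfl hz, Finset.sum_const, smul_zero]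
        ext n
        simp
      · obtain ⟨j₀, hj₀⟩ := hidx K hK hKb
        rw [Finset.sum_eq_single j₀ ?_ (by intro h; exact absurd (Finset.mem_univ j₀) h)]
        · rw [hcolP]
          simp only
          rw [if_pos hj₀.symm, Polynomial.coe_one, one_mul]
          exact hFI K j₀ hj₀
        · intro j _ hjne
          rw [hcolP]
          simp only
          rw [if_neg, Polynomial.coe_zero, zero_mul]
          intro hcon
          exact hjne (emb.injective (hj₀.trans hcon)).symm
    set bP : Fin t → Polynomial ℤ := fun j => Polynomial.X ^ (e j) with hbP
    set M : Matrix (Fin t) (Fin t) (Polynomial ℤ) := fun i j =>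
      (if j = i then 1 else 0) - colP (hilbI k R 𝒜 (J i)) j
        - Polynomial.X ^ (e i) * (if j = a then 1 else 0)
        + Polynomial.X ^ (e i) * colP (hilbI k R 𝒜 (C i)) j with hM
    have hAser : PowerSeries.mk (fun n => (hilbA k R 𝒜 n : ℤ)) = 1 + Fv a := by
      have hga : g a = hilbI k R 𝒜 (aug k R 𝒜) := by
        have := congrArg ofLex ha
        simpa [hg] using this
      ext n
      rw [map_add, PowerSeries.coeff_one, hFv]
      simp only [PowerSeries.coeff_mk, hga]
      cases n with
      | zero => rw [hA00, haug0]; norm_num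
      | succ m => rw [haugn (m + 1) (by omega)]; norm_num
    have hδ : ∀ i0 : Fin t, ∑ j, (if j = i0 then (1 : PowerSeries ℤ) else 0) * Fv j = Fv i0 := by
      intro i0
      rw [Finset.sum_eq_single i0 (fun j _ hne => by rw [if_neg hne, zero_mul])
        (fun h => absurd (Finset.mem_univ i0) h)]
      rw [if_pos rfl, one_mul]
    have hrow : ∀ i, ∑ j, ((M i j : Polynomial ℤ) : PowerSeries ℤ) * Fv j =
        (PowerSeries.X : PowerSeries ℤ) ^ (e i) := by
      intro i
      have expand : ∑ j, ((M i j : Polynomial ℤ) : PowerSeries ℤ) * Fv j =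
          (∑ j, (if j = i then (1 : PowerSeries ℤ) else 0) * Fv j)
          - (∑ j, ((colP (hilbI k R 𝒜 (J i)) j : Polynomial ℤ) : PowerSeries ℤ) * Fv j)
          - PowerSeries.X ^ (e i) *
            (∑ j, (if j = a then (1 : PowerSeries ℤ) else 0) * Fv j)
          + PowerSeries.X ^ (e i) *
            (∑ j, ((colP (hilbI k R 𝒜 (C i)) j : Polynomial ℤ) : PowerSeries ℤ) * Fv j) := by
        rw [Finset.mul_sum, Finset.mul_sum, ← Finset.sum_sub_distrib, ← Finset.sum_sub_distrib,
          ← Finset.sum_add_distrib]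
        refine Finset.sum_congr rfl ?_
        intro j _
        have hMij : ((M i j : Polynomial ℤ) : PowerSeries ℤ) =
            (if j = i then (1 : PowerSeries ℤ) else 0)
            - ((colP (hilbI k R 𝒜 (J i)) j : Polynomial ℤ) : PowerSeries ℤ)
            - PowerSeries.X ^ (e i) * (if j = a then (1 : PowerSeries ℤ) else 0)
            + PowerSeries.X ^ (e i) *
              ((colP (hilbI k R 𝒜 (C i)) j : Polynomial ℤ) : PowerSeries ℤ) := by
          rw [hM]
          simp only
          rw [← Polynomial.coeToPowerSeries.ringHom_apply, map_add, map_sub, map_sub,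
            map_mul, map_mul]
          simp only [Polynomial.coeToPowerSeries.ringHom_apply]
          rw [apply_ite (fun p : Polynomial ℤ => (p : PowerSeries ℤ)) (j = i),
            apply_ite (fun p : Polynomial ℤ => (p : PowerSeries ℤ)) (j = a),
            Polynomial.coe_one, Polynomial.coe_zero, Polynomial.coe_pow, Polynomial.coe_X]
        rw [hMij]
        ring
      rw [expand, hδ i, hδ a, hcolsum _ (hJF i), hcolsum _ (hCF i)]
      have hFi : Fv i = PowerSeries.mk (fun n => (hilbI k R 𝒜 (J i) n : ℤ))
          + PowerSeries.X ^ (e i) *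
            ((PowerSeries.mk fun n => (hilbA k R 𝒜 n : ℤ))
              - PowerSeries.mk (fun n => (hilbI k R 𝒜 (C i) n : ℤ))) := by
        ext n
        rw [map_add, PowerSeries.coeff_X_pow_mul', map_sub]
        simp only [hFv, PowerSeries.coeff_mk, hgI i]
        exact hrel i n
      rw [hFi, hAser]
      ring
    have hMv : (M.map (fun p : Polynomial ℤ => (p : PowerSeries ℤ))).mulVec Fv =
        fun i => (PowerSeries.X : PowerSeries ℤ) ^ (e i) := by
      funext i
      simp only [Matrix.mulVec, dotProduct, Matrix.map_apply]
      exact hrow i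
    have hdetmap : ∀ A : Matrix (Fin t) (Fin t) (Polynomial ℤ),
        (A.map (fun p : Polynomial ℤ => (p : PowerSeries ℤ))).det =
          ((A.det : Polynomial ℤ) : PowerSeries ℤ) := by
      intro A
      have hfn : (fun p : Polynomial ℤ => (p : PowerSeries ℤ)) =
          ⇑(Polynomial.coeToPowerSeries.ringHom (R := ℤ)) :=
        funext fun p => Polynomial.coeToPowerSeries.ringHom_apply.symm
      rw [hfn, ← RingHom.mapMatrix_apply, ← RingHom.map_det,
        Polynomial.coeToPowerSeries.ringHom_apply]
    have hsolve : ∀ i0, ((M.det : Polynomial ℤ) : PowerSeries ℤ) * Fv i0 =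
        (((M.updateCol i0 bP).det : Polynomial ℤ) : PowerSeries ℤ) := by
      have h2 := congrArg (fun v => Matrix.mulVec
        (Matrix.adjugate (M.map (fun p : Polynomial ℤ => (p : PowerSeries ℤ)))) v) hMv
      rw [Matrix.mulVec_mulVec, Matrix.adjugate_mul, Matrix.smul_mulVec,
        Matrix.one_mulVec, ← Matrix.cramer_eq_adjugate_mulVec] at h2
      intro i0
      have h3 := congrFun h2 i0
      rw [Pi.smul_apply, smul_eq_mul, Matrix.cramer_apply] at h3
      have h5 : ((M.map (fun p : Polynomial ℤ => (p : PowerSeries ℤ))).updateCol i0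
          (fun j => (PowerSeries.X : PowerSeries ℤ) ^ (e j))).det =
          (((M.updateCol i0 bP).det : Polynomial ℤ) : PowerSeries ℤ) := by
        have hb : (fun j : Fin t => (PowerSeries.X : PowerSeries ℤ) ^ (e j)) =
            (fun p : Polynomial ℤ => (p : PowerSeries ℤ)) ∘ bP := by
          funext j
          simp only [Function.comp, hbP]
          rw [Polynomial.coe_pow, Polynomial.coe_X]
        rw [hb, ← Matrix.map_updateCol, hdetmap]
      rw [hdetmap, h5] at h3
      exact h3
    have hMdeg : ∀ i j, (M i j).natDegree ≤ d := by
      intro i j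
      rw [hM]
      simp only
      have h1 : ((if j = i then (1 : Polynomial ℤ) else 0)).natDegree = 0 := by split <;> simp
      have h1a : ((if j = a then (1 : Polynomial ℤ) else 0)).natDegree = 0 := by split <;> simp
      have h2 : (colP (hilbI k R 𝒜 (J i)) j).natDegree = 0 := by
        rw [hcolP]; simp only; split <;> simp
      have h3 : (colP (hilbI k R 𝒜 (C i)) j).natDegree = 0 := by
        rw [hcolP]; simp only; split <;> simp
      refine le_trans (Polynomial.natDegree_add_le _ _) (max_le ?_ ?_)
      · refine le_trans (Polynomial.natDegree_sub_le _ _) (max_le ?_ ?_)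
        · refine le_trans (Polynomial.natDegree_sub_le _ _) (max_le ?_ ?_)
          · rw [h1]; exact Nat.zero_le d
          · rw [h2]; exact Nat.zero_le d
        · refine le_trans Polynomial.natDegree_mul_le ?_
          rw [h1a, add_zero]
          exact le_trans (Polynomial.natDegree_X_pow_le _) (he i)
      · refine le_trans Polynomial.natDegree_mul_le ?_
        rw [h3, add_zero]
        exact le_trans (Polynomial.natDegree_X_pow_le _) (he i)
    have hqdeg : M.det.natDegree ≤ d * s :=
      le_trans (det_natDegree_le M d hMdeg) (Nat.mul_le_mul le_rfl hts)
    have hpdeg : ∀ i0, ((M.updateCol i0 bP).det).natDegree ≤ d * s := by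
      intro i0
      refine le_trans (det_natDegree_le _ d ?_) (Nat.mul_le_mul le_rfl hts)
      intro i j
      rw [Matrix.updateCol_apply]
      split
      · exact le_trans (Polynomial.natDegree_X_pow_le _) (he i)
      · exact hMdeg i j
    have hJlt : ∀ i, (toLex (hilbI k R 𝒜 (J i)) : Lex (ℕ → ℕ)) < emb i := by
      intro i
      have h6 := (lexLt_iff _ _).mp (hlex i)
      rw [← hgI i] at h6
      have h8 : (toLex (g i) : Lex (ℕ → ℕ)) = emb i := toLex_ofLex _
      rwa [h8] at h6
    have halt : ∀ i, e i = 0 → a < i := by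
      intro i he0
      obtain ⟨hCJ, hIA⟩ := hdeg0 i he0
      have h6 : (toLex (hilbI k R 𝒜 (aug k R 𝒜)) : Lex (ℕ → ℕ)) < toLex (hilbA k R 𝒜) :=
        (lexLt_iff _ _).mp hlexaug
      have h7 : (toLex (hilbA k R 𝒜) : Lex (ℕ → ℕ)) = emb i := by
        rw [← hIA, ← hgI i]
        exact toLex_ofLex _
      rw [← ha] at h6
      rw [h7] at h6
      exact emb.lt_iff_lt.mp h6
    have hq0 : M.det.coeff 0 = 1 := by
      have h1 : M.det.coeff 0 = (M.map (Polynomial.evalRingHom (0 : ℤ))).det := by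
        rw [Polynomial.coeff_zero_eq_eval_zero]
        have h2 := RingHom.map_det (Polynomial.evalRingHom (0 : ℤ)) M
        rw [RingHom.mapMatrix_apply] at h2
        exact h2
      rw [h1]
      have hent : ∀ i j : Fin t, (M.map (Polynomial.evalRingHom (0 : ℤ))) i j =
          (if j = i then 1 else 0)
          - (if toLex (hilbI k R 𝒜 (J i)) = emb j then 1 else 0)
          - (if e i = 0 then 1 else 0) * (if j = a then 1 else 0)
          + (if e i = 0 then 1 else 0) *
            (if toLex (hilbI k R 𝒜 (C i)) = emb j then 1 else 0) := by
        intro i j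
        rw [Matrix.map_apply, hM]
        simp only
        rw [hcolP]
        simp only
        rw [map_add, map_sub, map_sub, map_mul, map_mul]
        rw [apply_ite (Polynomial.evalRingHom (0 : ℤ)) (j = i), map_one, map_zero]
        rw [apply_ite (Polynomial.evalRingHom (0 : ℤ))
          (toLex (hilbI k R 𝒜 (J i)) = emb j), map_one, map_zero]
        rw [apply_ite (Polynomial.evalRingHom (0 : ℤ))
          (toLex (hilbI k R 𝒜 (C i)) = emb j), map_one, map_zero]
        rw [apply_ite (Polynomial.evalRingHom (0 : ℤ)) (j = a), map_one, map_zero]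
        rw [map_pow]
        rw [show (Polynomial.evalRingHom (0 : ℤ)) Polynomial.X = 0 by simp]
        rw [zero_pow_eq]
      have htri : (M.map (Polynomial.evalRingHom (0 : ℤ))).BlockTriangular OrderDual.toDual := by
        intro i j hij
        have hij' : i < j := hij
        rw [hent i j]
        have hJ0 : (if toLex (hilbI k R 𝒜 (J i)) = emb j then (1 : ℤ) else 0) = 0 := by
          rw [if_neg]
          intro hcon
          have h6 := hJlt i
          rw [hcon] at h6
          exact absurd (emb.lt_iff_lt.mp h6) (not_lt.mpr (le_of_lt hij'))
        by_cases he0 : e i = 0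
        · obtain ⟨hCJ, _⟩ := hdeg0 i he0
          rw [hCJ, if_pos he0, hJ0]
          rw [if_neg (ne_of_gt (lt_trans (halt i he0) hij'))]
          rw [if_neg (ne_of_gt hij')]
          ring
        · rw [if_neg he0, hJ0, if_neg (ne_of_gt hij')]
          ring
      have hdiag : ∀ i, (M.map (Polynomial.evalRingHom (0 : ℤ))) i i = 1 := by
        intro i
        rw [hent i i]
        have hJ0 : (if toLex (hilbI k R 𝒜 (J i)) = emb i then (1 : ℤ) else 0) = 0 := by
          rw [if_neg]
          intro hcon
          exact absurd (hcon ▸ hJlt i) (lt_irrefl _)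
        by_cases he0 : e i = 0
        · obtain ⟨hCJ, _⟩ := hdeg0 i he0
          rw [hCJ, if_pos he0, hJ0, if_pos rfl, if_neg (ne_of_gt (halt i he0))]
          ring
        · rw [if_neg he0, hJ0, if_pos rfl]
          ring
      rw [Matrix.det_of_lowerTriangular _ htri]
      rw [Finset.prod_congr rfl (fun i _ => hdiag i)]
      exact Finset.prod_const_one
    refine ⟨⟨M.det + (M.updateCol a bP).det, M.det,
      le_trans (Polynomial.natDegree_add_le _ _) (max_le hqdeg (hpdeg a)), hqdeg, hq0, ?_⟩, ?_⟩
    · rw [hconv, hconv, hAser, Polynomial.coe_add, mul_add, mul_one, hsolve a]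
    · intro I' hI'
      by_cases hI'b : I' = ⊥
      · subst hI'b
        refine ⟨0, 1, by simp, by simp, by simp, ?_⟩
        rw [hconv, hconv, hilbI_bot, Polynomial.coe_one, Polynomial.coe_zero, one_mul]
        ext n
        simp
      · obtain ⟨j₀, hj₀⟩ := hidx I' hI' hI'b
        refine ⟨(M.updateCol j₀ bP).det, M.det, hpdeg j₀, hqdeg, hq0, ?_⟩
        rw [hconv, hconv, ← hFI I' j₀ hj₀]
        exact hsolve j₀

end NCG
end

section
/- Let R be a connected finitely generated locally finite graded k-algebra. The following are equivalent: (i) there exists d_0 such that for every d ≥ d_0 the family of all homogeneous right ideals of R generated in degrees ≤ d is a coherent family (R is universally coherent); (ii) there exists d_1 such that for every d ≥ d_1 and all homogeneous a_1,…,a_n ∈ R of degrees ≤ d, the module of solutions of a_1x_1+⋯+a_nx_n = 0 is generated in degrees ≤ 2d. Moreover, either condition implies that R is effectively coherent. -/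
open MulOpposite

namespace NCG

variable (k : Type) [Field k] (R : Type) [Ring R] [Algebra k R]

variable (M : Type) [AddCommGroup M] [Module Rᵐᵒᵖ M] [Module k M]

/-! ### Infrastructure for statement 18 -/

section Infra18
set_option linter.unusedSectionVars false

open DirectSum

variable {k : Type} [Field k] {R : Type} [Ring R] [Algebra k R]

/-- A `GradedRing` structure from `IsConnAlg`. -/
noncomputable def mkGR (𝒜 : ℕ → Submodule k R) (hconn : IsConnAlg k R 𝒜) :
    GradedRing 𝒜 :=
  { one_mem := by
      rw [hconn.2.2]; exact Submodule.mem_span_singleton_self 1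
    mul_mem := fun {i j} {x y} hx hy => hconn.1 i j x hx y hy
    toDecomposition := hconn.2.1.chooseDecomposition }

variable (𝒜 : ℕ → Submodule k R) [GradedRing 𝒜]

/-- homogeneous projection -/
noncomputable def pc (n : ℕ) (r : R) : R := ((DirectSum.decompose 𝒜 r) n : R)

lemma pc_mem (n : ℕ) (r : R) : pc 𝒜 n r ∈ 𝒜 n := SetLike.coe_mem _

lemma pc_of_mem_same {n : ℕ} {r : R} (h : r ∈ 𝒜 n) : pc 𝒜 n r = r :=
  DirectSum.decompose_of_mem_same 𝒜 h

lemma pc_of_mem_ne {i n : ℕ} {r : R} (h : r ∈ 𝒜 i) (hne : i ≠ n) : pc 𝒜 n r = 0 :=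
  DirectSum.decompose_of_mem_ne 𝒜 h hne

lemma pc_add (n : ℕ) (x y : R) : pc 𝒜 n (x + y) = pc 𝒜 n x + pc 𝒜 n y := by
  unfold pc; rw [DirectSum.decompose_add]; rfl

lemma pc_zero (n : ℕ) : pc 𝒜 n (0 : R) = 0 := by
  unfold pc; rw [DirectSum.decompose_zero]; rfl

lemma pc_sum (n : ℕ) {α : Type} (s : Finset α) (f : α → R) :
    pc 𝒜 n (∑ i ∈ s, f i) = ∑ i ∈ s, pc 𝒜 n (f i) := by
  classical
  induction s using Finset.induction with
  | empty => simp [pc_zero]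
  | insert _ _ h ih => rw [Finset.sum_insert h, Finset.sum_insert h, pc_add, ih]

lemma pc_mul_left {i : ℕ} {x : R} (hx : x ∈ 𝒜 i) (y : R) (n : ℕ) :
    pc 𝒜 n (x * y) = if i ≤ n then x * pc 𝒜 (n - i) y else 0 := by
  unfold pc
  split_ifs with h
  · exact DirectSum.coe_decompose_mul_of_left_mem_of_le 𝒜 hx h
  · exact DirectSum.coe_decompose_mul_of_left_mem_of_not_le 𝒜 hx h

/-- decomposition into finitely many homogeneous components -/
lemma pc_spec (r : R) : ∃ s : Finset ℕ, (∀ n ∉ s, pc 𝒜 n r = 0) ∧ ∑ n ∈ s, pc 𝒜 n r = r := by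
  classical
  refine ⟨(DirectSum.decompose 𝒜 r).support, ?_, DirectSum.sum_support_decompose 𝒜 r⟩
  intro n hn
  unfold pc
  rw [DFinsupp.notMem_support_iff.mp hn]; rfl


lemma grZ_natCast (i : ℕ) : grZ k R 𝒜 (i : ℤ) = 𝒜 i := by
  unfold grZ; rw [if_pos (Int.natCast_nonneg i), Int.toNat_natCast]

lemma grZ_neg' {j : ℤ} (h : j < 0) : grZ k R 𝒜 j = ⊥ := if_neg (not_le.mpr h)

lemma grZ_nonneg {j : ℤ} (h : 0 ≤ j) : grZ k R 𝒜 j = 𝒜 j.toNat := if_pos h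

lemma mem_grZ_of_mem {i : ℕ} {x : R} (h : x ∈ 𝒜 i) : x ∈ grZ k R 𝒜 (i : ℤ) := by
  rw [grZ_natCast]; exact h

lemma grZ_mul {a b : ℤ} {x y : R} (hx : x ∈ grZ k R 𝒜 a) (hy : y ∈ grZ k R 𝒜 b) :
    x * y ∈ grZ k R 𝒜 (a + b) := by
  rcases lt_or_ge a 0 with ha | ha
  · rw [grZ_neg' 𝒜 ha] at hx
    simp only [Submodule.mem_bot] at hx
    rw [hx, zero_mul]; exact Submodule.zero_mem _
  rcases lt_or_ge b 0 with hb | hb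
  · rw [grZ_neg' 𝒜 hb] at hy
    simp only [Submodule.mem_bot] at hy
    rw [hy, mul_zero]; exact Submodule.zero_mem _
  rw [grZ_nonneg 𝒜 ha] at hx
  rw [grZ_nonneg 𝒜 hb] at hy
  rw [grZ_nonneg 𝒜 (by omega), Int.toNat_add ha hb]
  exact SetLike.mul_mem_graded hx hy

/-- integer-indexed homogeneous projection -/
noncomputable def pcz (j : ℤ) (r : R) : R := if 0 ≤ j then pc 𝒜 j.toNat r else 0

lemma pcz_mem (j : ℤ) (r : R) : pcz 𝒜 j r ∈ grZ k R 𝒜 j := by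
  unfold pcz
  split_ifs with h
  · rw [grZ_nonneg 𝒜 h]; exact pc_mem 𝒜 _ r
  · exact Submodule.zero_mem _

lemma pcz_of_mem_same {j : ℤ} {r : R} (h : r ∈ grZ k R 𝒜 j) : pcz 𝒜 j r = r := by
  unfold pcz
  split_ifs with hj
  · exact pc_of_mem_same 𝒜 (by rwa [grZ_nonneg 𝒜 hj] at h)
  · rw [grZ_neg' 𝒜 (by omega)] at h
    simpa using h.symm

lemma pc_grZ_mul_left {b : ℤ} {g : R} (hg : g ∈ grZ k R 𝒜 b) (r : R) (n : ℕ) :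
    pc 𝒜 n (g * r) = g * pcz 𝒜 ((n : ℤ) - b) r := by
  rcases lt_or_ge b 0 with hb | hb
  · rw [grZ_neg' 𝒜 hb] at hg
    simp only [Submodule.mem_bot] at hg
    rw [hg, zero_mul, zero_mul, pc_zero]
  · rw [grZ_nonneg 𝒜 hb] at hg
    rw [pc_mul_left 𝒜 hg]
    unfold pcz
    rcases le_or_gt b.toNat n with h | h
    · rw [if_pos h, if_pos (by omega)]
      congr 2
      omega
    · rw [if_neg (by omega), if_neg (by omega), mul_zero]

lemma op_smul_eq' (r y : R) : op r • y = y * r := rfl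

lemma mul_right_mem {I : Submodule Rᵐᵒᵖ R} {x : R} (h : x ∈ I) (r : R) : x * r ∈ I :=
  I.smul_mem (op r) h

lemma ksmul_eq_mul_right (c : k) (x : R) : c • x = x * algebraMap k R c := by
  rw [Algebra.smul_def, Algebra.commutes]

/-- homogeneous components of elements of a span of homogeneous elements stay in the span -/
lemma pc_mem_span (S : Set R) (hS : ∀ s ∈ S, ∃ i : ℕ, s ∈ 𝒜 i) {x : R}
    (hx : x ∈ Submodule.span Rᵐᵒᵖ S) (n : ℕ) : pc 𝒜 n x ∈ Submodule.span Rᵐᵒᵖ S := by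
  classical
  induction hx using Submodule.span_induction generalizing n with
  | mem s hs =>
    obtain ⟨i, hi⟩ := hS s hs
    rcases eq_or_ne i n with rfl | hne
    · rw [pc_of_mem_same 𝒜 hi]; exact Submodule.subset_span hs
    · rw [pc_of_mem_ne 𝒜 hi hne]; exact Submodule.zero_mem _
  | zero => rw [pc_zero]; exact Submodule.zero_mem _
  | add x y _ _ ihx ihy => rw [pc_add]; exact Submodule.add_mem _ (ihx n) (ihy n)
  | smul c x _ ih =>
    obtain ⟨s, _, hsum⟩ := pc_spec 𝒜 x
    have : c • x = ∑ i ∈ s, pc 𝒜 i x * c.unop := by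
      rw [← Finset.sum_mul, hsum]; rfl
    rw [this, pc_sum]
    refine Submodule.sum_mem _ fun i _ => ?_
    rw [pc_mul_left 𝒜 (pc_mem 𝒜 i x)]
    split_ifs with h
    · exact mul_right_mem (ih i) _
    · exact Submodule.zero_mem _

lemma genLE_mono {M : Type} [AddCommGroup M] [Module Rᵐᵒᵖ M] [Module k M]
    (ℳ : ℤ → Submodule k M) {N : Submodule Rᵐᵒᵖ M} {d d' : ℤ} (h : d ≤ d')
    (hN : GenLE k R M ℳ N d) : GenLE k R M ℳ N d' := by
  refine le_trans hN (Submodule.span_mono ?_)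
  rintro x ⟨hxN, j, hj, hx⟩
  exact ⟨hxN, j, le_trans hj h, hx⟩

lemma finGenLE_genLE {I : Submodule Rᵐᵒᵖ R} {d : ℕ} (h : FinGenLE k R 𝒜 I d) :
    GenLE k R R (grZ k R 𝒜) I (d : ℤ) := by
  obtain ⟨n, x, dx, hdx, hmem, hspan⟩ := h
  intro y hy
  rw [← hspan] at hy
  refine Submodule.span_le.mpr ?_ hy
  rintro _ ⟨i, rfl⟩
  exact Submodule.subset_span ⟨hspan ▸ Submodule.subset_span ⟨i, rfl⟩,
    (dx i : ℤ), by exact_mod_cast hdx i, mem_grZ_of_mem 𝒜 (hmem i)⟩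

lemma finGenLE_gradedSub {I : Submodule Rᵐᵒᵖ R} {d : ℕ} (h : FinGenLE k R 𝒜 I d) :
    IsGradedSub k R R (grZ k R 𝒜) I := by
  obtain ⟨n, x, dx, hdx, hmem, hspan⟩ := h
  intro y hy
  rw [← hspan] at hy
  refine Submodule.span_le.mpr ?_ hy
  rintro _ ⟨i, rfl⟩
  exact Submodule.subset_span ⟨hspan ▸ Submodule.subset_span ⟨i, rfl⟩,
    (dx i : ℤ), mem_grZ_of_mem 𝒜 (hmem i)⟩

lemma finGenLE_fg {I : Submodule Rᵐᵒᵖ R} {d : ℕ} (h : FinGenLE k R 𝒜 I d) : I.FG := by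
  obtain ⟨n, x, dx, _, _, hspan⟩ := h
  exact hspan ▸ Submodule.fg_span (Set.finite_range x)

lemma pc_mem_of_finGenLE {I : Submodule Rᵐᵒᵖ R} {d : ℕ} (hI : FinGenLE k R 𝒜 I d)
    {x : R} (hx : x ∈ I) (n : ℕ) : pc 𝒜 n x ∈ I := by
  obtain ⟨m, g, dg, _, hmem, hspan⟩ := hI
  rw [← hspan] at hx ⊢
  exact pc_mem_span 𝒜 _ (by rintro _ ⟨i, rfl⟩; exact ⟨dg i, hmem i⟩) hx n


section SolTools

/-- general-index version of `IsSol` -/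
def isSolG {ι : Type} [Fintype ι] (a : ι → R) (v : ι → R) : Prop := ∑ i, a i * v i = 0

/-- general-index version of `FreeHomog` -/
def homogG {ι : Type} (dgv : ι → ℤ) (w : ι → R) (j : ℤ) : Prop :=
  ∀ i, w i ∈ grZ k R 𝒜 (j - dgv i)

/-- the homogeneous solutions of degree at most `D` -/
def solSet {ι : Type} [Fintype ι] (a : ι → R) (dgv : ι → ℤ) (D : ℤ) : Set (ι → R) :=
  {w | isSolG a w ∧ ∃ j ≤ D, homogG 𝒜 dgv w j}

/-- general-index version of `SolGenLE` -/
def solGenG {ι : Type} [Fintype ι] (a : ι → R) (dgv : ι → ℤ) (D : ℤ) : Prop :=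
  ∀ v : ι → R, isSolG a v → v ∈ Submodule.span Rᵐᵒᵖ (solSet 𝒜 a dgv D)

lemma isSol_iff_isSolG {n : ℕ} (a : Fin n → R) (v : Fin n → R) :
    IsSol R R a v ↔ isSolG a v := by
  unfold IsSol isSolG
  constructor <;> intro h <;> rw [← h] <;> exact Finset.sum_congr rfl fun i _ => rfl

lemma freeHomog_iff_homogG {n : ℕ} (dgv : Fin n → ℤ) (w : Fin n → R) (j : ℤ) :
    FreeHomog k R 𝒜 dgv w j ↔ homogG 𝒜 dgv w j := Iff.rfl

lemma solGenLE_iff_solGenG {n : ℕ} (a : Fin n → R) (dgv : Fin n → ℤ) (D : ℤ) :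
    SolGenLE k R R 𝒜 a dgv D ↔ solGenG 𝒜 a dgv D := by
  unfold SolGenLE solGenG solSet
  have hset : {w : Fin n → R | IsSol R R a w ∧ ∃ j ≤ D, FreeHomog k R 𝒜 dgv w j} =
      {w | isSolG a w ∧ ∃ j ≤ D, homogG 𝒜 dgv w j} := by
    ext w
    constructor
    · rintro ⟨h1, h2⟩
      exact ⟨(isSol_iff_isSolG a w).mp h1, h2⟩
    · rintro ⟨h1, h2⟩
      exact ⟨(isSol_iff_isSolG a w).mpr h1, h2⟩
  rw [hset]
  constructor <;> intro h v hv
  · exact h v ((isSol_iff_isSolG a v).mpr hv)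
  · exact h v ((isSol_iff_isSolG a v).mp hv)

/-- left multiplication as an `Rᵐᵒᵖ`-linear map -/
def lmulL (c : R) : R →ₗ[Rᵐᵒᵖ] R where
  toFun y := c * y
  map_add' := mul_add c
  map_smul' r y := (mul_assoc c y r.unop).symm

/-- the linear map whose kernel is the solution module -/
noncomputable def solMap {ι : Type} [Fintype ι] (a : ι → R) : (ι → R) →ₗ[Rᵐᵒᵖ] R :=
  ∑ i, (lmulL (a i)).comp (LinearMap.proj i)

lemma solMap_apply {ι : Type} [Fintype ι] (a : ι → R) (v : ι → R) :
    solMap a v = ∑ i, a i * v i := by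
  unfold solMap
  rw [LinearMap.sum_apply]
  rfl

lemma isSolG_iff_solMap {ι : Type} [Fintype ι] (a : ι → R) (v : ι → R) :
    isSolG a v ↔ solMap a v = 0 := by rw [solMap_apply]; rfl

/-- the `k`-span is contained in the right span -/
lemma spanK_le_spanOp (s : Set R) (x : R) (hx : x ∈ Submodule.span k s) :
    x ∈ Submodule.span Rᵐᵒᵖ s := by
  induction hx using Submodule.span_induction with
  | mem y hy => exact Submodule.subset_span hy
  | zero => exact Submodule.zero_mem _
  | add y z _ _ ihy ihz => exact Submodule.add_mem _ ihy ihz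
  | smul c y _ ih => 
    rw [ksmul_eq_mul_right]
    exact mul_right_mem ih _

/-- packaging a finite homogeneous generating set -/
lemma finGenLE_of_finset {I : Submodule Rᵐᵒᵖ R} {d : ℕ} (s : Finset R)
    (hs : ∀ y ∈ s, ∃ j ≤ d, y ∈ 𝒜 j) (hspan : Submodule.span Rᵐᵒᵖ (s : Set R) = I) :
    FinGenLE k R 𝒜 I d := by
  classical
  refine ⟨s.card, fun i => (s.equivFin.symm i : R), 
    fun i => (hs _ (s.equivFin.symm i).2).choose, fun i => ?_, fun i => ?_, ?_⟩
  · exact (hs _ (s.equivFin.symm i).2).choose_spec.1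
  · exact (hs _ (s.equivFin.symm i).2).choose_spec.2
  · rw [← hspan]
    congr 1
    ext y
    constructor
    · rintro ⟨i, rfl⟩
      exact (s.equivFin.symm i).2
    · intro hy
      exact ⟨s.equivFin ⟨y, hy⟩, by simp⟩

set_option maxHeartbeats 1000000 in
/-- extraction of finite homogeneous generators in degrees at most `c` (L3) -/
lemma finGenLE_of_genLE (hlf : LocFin k R 𝒜) {I : Submodule Rᵐᵒᵖ R} {c : ℕ}
    (h : I ≤ Submodule.span Rᵐᵒᵖ {y : R | y ∈ I ∧ ∃ j ≤ (c : ℤ), y ∈ grZ k R 𝒜 j}) :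
    FinGenLE k R 𝒜 I c := by
  classical
  -- graded pieces of I
  set V : ℕ → Submodule k R := fun j => 𝒜 j ⊓ I.restrictScalars k with hV
  have hVfd : ∀ j, Module.Finite k ↥(V j) := by
    intro j
    haveI := hlf j
    exact Submodule.finiteDimensional_of_le (V := R) (S₁ := V j) (S₂ := 𝒜 j) inf_le_left
  -- a finite spanning set for each piece
  have hVs : ∀ j, ∃ t : Finset R, Submodule.span k (↑t : Set R) = V j := by
    intro j
    exact Module.Finite.iff_fg.mp (hVfd j)
  choose t ht using hVs
  set s : Finset R := (Finset.range (c + 1)).biUnion t with hsdef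
  have hsub : ∀ j, (↑(t j) : Set R) ⊆ ↑(V j) := fun j => (ht j) ▸ Submodule.subset_span
  refine finGenLE_of_finset 𝒜 s ?_ ?_
  · intro y hy
    obtain ⟨j, hj, hyj⟩ := Finset.mem_biUnion.mp hy
    exact ⟨j, by simpa using Nat.lt_succ_iff.mp (Finset.mem_range.mp hj), (hsub j hyj).1⟩
  · apply le_antisymm
    · rw [Submodule.span_le]
      intro y hy
      obtain ⟨j, _, hyj⟩ := Finset.mem_biUnion.mp hy
      exact (hsub j hyj).2
    · refine le_trans h (Submodule.span_le.mpr ?_)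
      rintro y ⟨hyI, j, hj, hyj⟩
      rcases lt_or_ge j 0 with hneg | hpos
      · rw [grZ_neg' 𝒜 hneg] at hyj
        simp only [Submodule.mem_bot] at hyj
        rw [hyj]
        exact Submodule.zero_mem _
      · rw [grZ_nonneg 𝒜 hpos] at hyj
        have hy : y ∈ V j.toNat := ⟨hyj, hyI⟩
        have : y ∈ Submodule.span k (↑(t j.toNat) : Set R) := by rw [ht j.toNat]; exact hy
        have h1 : y ∈ Submodule.span Rᵐᵒᵖ ((t j.toNat : Finset R) : Set R) :=
          spanK_le_spanOp _ y this
        have h2 : ((t j.toNat : Finset R) : Set R) ⊆ ((s : Finset R) : Set R) := by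
          intro z hz
          exact Finset.mem_coe.mpr
            (Finset.mem_biUnion.mpr ⟨j.toNat, Finset.mem_range.mpr (by omega), hz⟩)
        exact Submodule.span_mono h2 h1


/-- membership of the colon ideal via solutions (projection lemma, L4) -/
lemma colon_le_span_homog {n : ℕ} (a : Fin n → R) (dg : Fin n → ℕ) (x : R) (e : ℕ) (D : ℤ)
    (hsol : solGenG 𝒜 (Fin.snoc a x) (Fin.snoc (fun i => (dg i : ℤ)) (e : ℤ)) D) :
    colon R x (Submodule.span Rᵐᵒᵖ (Set.range a)) ≤
      Submodule.span Rᵐᵒᵖ {y : R | y ∈ colon R x (Submodule.span Rᵐᵒᵖ (Set.range a)) ∧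
        ∃ j ≤ D - (e : ℤ), y ∈ grZ k R 𝒜 j} := by
  classical
  intro r hr
  have hxr : x * r ∈ Submodule.span Rᵐᵒᵖ (Set.range a) := hr
  obtain ⟨c, hc⟩ := (Submodule.mem_span_range_iff_exists_fun Rᵐᵒᵖ).mp hxr
  have hc' : ∑ i : Fin n, a i * (c i).unop = x * r := by
    rw [← hc]; exact Finset.sum_congr rfl fun i _ => rfl
  have hsolv : isSolG (Fin.snoc a x) (Fin.snoc (fun i => (c i).unop) (-r)) := by
    unfold isSolG
    rw [Fin.sum_univ_castSucc]
    simp only [Fin.snoc_castSucc, Fin.snoc_last]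
    rw [hc', mul_neg, add_neg_cancel]
  have hmem := hsol _ hsolv
  -- project to the last coordinate
  set π : (Fin (n+1) → R) →ₗ[Rᵐᵒᵖ] R := LinearMap.proj (Fin.last n) with hπ
  have hπv : π (Fin.snoc (fun i => (c i).unop) (-r)) = -r := by
    simp [hπ, Fin.snoc_last]
  have himg : π (Fin.snoc (fun i => (c i).unop) (-r)) ∈
      Submodule.span Rᵐᵒᵖ (π '' (solSet 𝒜 (Fin.snoc a x) (Fin.snoc (fun i => (dg i : ℤ)) (e : ℤ)) D)) := by
    rw [← Submodule.map_span]
    exact Submodule.mem_map_of_mem hmem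
  rw [hπv] at himg
  have hsub : π '' (solSet 𝒜 (Fin.snoc a x) (Fin.snoc (fun i => (dg i : ℤ)) (e : ℤ)) D) ⊆
      {y : R | y ∈ colon R x (Submodule.span Rᵐᵒᵖ (Set.range a)) ∧
        ∃ j ≤ D - (e : ℤ), y ∈ grZ k R 𝒜 j} := by
    rintro _ ⟨w, ⟨hwsol, j, hj, hwhom⟩, rfl⟩
    have hπw : π w = w (Fin.last n) := rfl
    constructor
    · -- x * w(last) ∈ J
      have h0 : ∑ i : Fin n, a i * w i.castSucc + x * w (Fin.last n) = 0 := by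
        have := hwsol
        unfold isSolG at this
        rw [Fin.sum_univ_castSucc] at this
        simpa [Fin.snoc_castSucc, Fin.snoc_last] using this
      have h1 : x * w (Fin.last n) = -∑ i : Fin n, a i * w i.castSucc :=
        eq_neg_of_add_eq_zero_right h0
      show x * (π w) ∈ Submodule.span Rᵐᵒᵖ (Set.range a)
      rw [hπw, h1]
      refine Submodule.neg_mem _ (Submodule.sum_mem _ fun i _ => ?_)
      exact mul_right_mem (Submodule.subset_span (Set.mem_range_self i)) _
    · refine ⟨j - e, by omega, ?_⟩
      have := hwhom (Fin.last n)
      rw [Fin.snoc_last] at this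
      exact this
  have := Submodule.neg_mem _ (Submodule.span_mono hsub himg)
  rwa [neg_neg] at this


/-- finite homogeneous generation of the augmentation ideal -/
lemma aug_gens (h0 : 𝒜 0 = Submodule.span k {(1 : R)}) (hfga : FinGenAlg k R) :
    ∃ N : ℕ, ∀ d : ℕ, N ≤ d → FinGenLE k R 𝒜 (aug k R 𝒜) d := by
  classical
  obtain ⟨s, hs⟩ := hfga
  choose tset htz htsum using fun y : R => pc_spec 𝒜 y
  set P : Finset (ℕ × R) := s.biUnion (fun y => (tset y).image (fun n => (n, pc 𝒜 n y))) with hP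
  set M : Finset (ℕ × R) := P.filter (fun p => 1 ≤ p.1) with hM
  set G : Finset R := M.image Prod.snd with hG
  set N : ℕ := M.sup Prod.fst with hN
  have hGdeg : ∀ z ∈ G, ∃ n, 1 ≤ n ∧ n ≤ N ∧ z ∈ 𝒜 n := by
    intro z hz
    obtain ⟨p, hpM, rfl⟩ := Finset.mem_image.mp hz
    obtain ⟨hpP, hp1⟩ := Finset.mem_filter.mp hpM
    obtain ⟨y, _, hpy⟩ := Finset.mem_biUnion.mp hpP
    obtain ⟨n, _, rfl⟩ := Finset.mem_image.mp hpy
    exact ⟨n, hp1, Finset.le_sup (f := Prod.fst) hpM, pc_mem 𝒜 n y⟩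
  have hkey : ∀ z, z ∈ Algebra.adjoin k (s : Set R) → ∀ i, 1 ≤ i →
      pc 𝒜 i z ∈ Submodule.span Rᵐᵒᵖ (G : Set R) := by
    intro z hz
    induction hz using Algebra.adjoin_induction with
    | mem y hy =>
      intro i hi
      by_cases hmem : i ∈ tset y
      · refine Submodule.subset_span ?_
        refine Finset.mem_coe.mpr (Finset.mem_image.mpr ⟨(i, pc 𝒜 i y), ?_, rfl⟩)
        refine Finset.mem_filter.mpr ⟨?_, hi⟩
        exact Finset.mem_biUnion.mpr ⟨y, hy, Finset.mem_image.mpr ⟨i, hmem, rfl⟩⟩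
      · rw [htz y i hmem]
        exact Submodule.zero_mem _
    | algebraMap c =>
      intro i hi
      have h1 : algebraMap k R c ∈ 𝒜 0 := by
        rw [Algebra.algebraMap_eq_smul_one]
        exact Submodule.smul_mem _ c (SetLike.one_mem_graded 𝒜)
      rw [pc_of_mem_ne 𝒜 h1 (by omega)]
      exact Submodule.zero_mem _
    | add x y hx hy ihx ihy =>
      intro i hi
      rw [pc_add]
      exact Submodule.add_mem _ (ihx i hi) (ihy i hi)
    | mul x y hx hy ihx ihy =>
      intro i hi
      obtain ⟨t, ht0, htsum'⟩ := pc_spec 𝒜 x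
      have hxy : x * y = ∑ n ∈ t, pc 𝒜 n x * y := by rw [← Finset.sum_mul, htsum']
      rw [hxy, pc_sum]
      refine Submodule.sum_mem _ fun n _ => ?_
      rw [pc_mul_left 𝒜 (pc_mem 𝒜 n x)]
      split_ifs with hni
      · rcases Nat.eq_zero_or_pos n with rfl | hn
        · have hx0 : pc 𝒜 0 x ∈ Submodule.span k {(1 : R)} := h0 ▸ pc_mem 𝒜 0 x
          obtain ⟨c, hc⟩ := Submodule.mem_span_singleton.mp hx0
          have heq : pc 𝒜 0 x * pc 𝒜 (i - 0) y = pc 𝒜 i y * algebraMap k R c := by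
            rw [← hc]
            rw [Nat.sub_zero, ← ksmul_eq_mul_right, smul_mul_assoc, one_mul]
          rw [heq]
          exact mul_right_mem (ihy i hi) _
        · exact mul_right_mem (ihx n hn) _
      · exact Submodule.zero_mem _
  have hspan : Submodule.span Rᵐᵒᵖ (G : Set R) = aug k R 𝒜 := by
    apply le_antisymm
    · refine Submodule.span_le.mpr ?_
      intro z hz
      obtain ⟨n, hn1, _, hzn⟩ := hGdeg z hz
      exact Submodule.subset_span (Set.mem_iUnion.mpr ⟨n, Set.mem_iUnion.mpr ⟨hn1, hzn⟩⟩)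
    · refine Submodule.span_le.mpr ?_
      intro z hz
      obtain ⟨_, ⟨i, rfl⟩, _, ⟨hi1, rfl⟩, hzi⟩ := hz
      have := hkey z (hs ▸ Algebra.mem_top) i hi1
      rwa [pc_of_mem_same 𝒜 hzi] at this
  refine ⟨N, fun d hd => finGenLE_of_finset 𝒜 G ?_ hspan⟩
  intro y hy
  obtain ⟨n, _, hnN, hyn⟩ := hGdeg y hy
  exact ⟨n, le_trans hnN hd, hyn⟩


lemma genLE_bot_of_neg {I : Submodule Rᵐᵒᵖ R} {dI : ℤ} (hdI : dI < 0)
    (h : GenLE k R R (grZ k R 𝒜) I dI) : I = ⊥ := by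
  refine le_bot_iff.mp (le_trans h ?_)
  refine Submodule.span_le.mpr ?_
  rintro y ⟨_, j, hj, hy⟩
  rw [grZ_neg' 𝒜 (by omega)] at hy
  simpa using hy

lemma finGenLE_mono {I : Submodule Rᵐᵒᵖ R} {c d : ℕ} (hcd : c ≤ d)
    (h : FinGenLE k R 𝒜 I c) : FinGenLE k R 𝒜 I d := by
  obtain ⟨n, x, dx, h1, h2, h3⟩ := h
  exact ⟨n, x, dx, fun i => le_trans (h1 i) hcd, h2, h3⟩

lemma finGenLE_bot (d : ℕ) : FinGenLE k R 𝒜 (⊥ : Submodule Rᵐᵒᵖ R) d := by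
  refine ⟨0, fun i => 0, fun i => 0, fun i => i.elim0, fun i => i.elim0, ?_⟩
  rw [Set.range_eq_empty, Submodule.span_empty]

lemma snoc_cast_eq {nn : ℕ} (drest : Fin nn → ℕ) (m : ℕ) :
    (fun i => ((Fin.snoc drest m : Fin (nn+1) → ℕ) i : ℤ)) =
      Fin.snoc (fun i => (drest i : ℤ)) (m : ℤ) := by
  funext i
  induction i using Fin.lastCases with
  | last => simp
  | cast i => simp

lemma span_range_snoc {nn : ℕ} (rest : Fin nn → R) (x : R) :
    Submodule.span Rᵐᵒᵖ (Set.range (Fin.snoc rest x : Fin (nn+1) → R)) =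
      Submodule.span Rᵐᵒᵖ (Set.range rest) ⊔ Submodule.span Rᵐᵒᵖ {x} := by
  rw [← Submodule.span_union]
  congr 1
  ext y
  constructor
  · rintro ⟨i, rfl⟩
    induction i using Fin.lastCases with
    | last => right; simp
    | cast i => left; exact ⟨i, by simp⟩
  · rintro (⟨i, rfl⟩ | rfl)
    · exact ⟨i.castSucc, by simp⟩
    · exact ⟨Fin.last nn, by simp⟩


/-- Direction (ii) → (i) of statement 18. -/
lemma dir_2_to_1 (h0 : 𝒜 0 = Submodule.span k {(1 : R)}) (hlf : LocFin k R 𝒜)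
    (hfga : FinGenAlg k R)
    (h2 : ∃ d1 : ℕ, ∀ d : ℕ, d1 ≤ d → ∀ (n : ℕ) (a : Fin n → R) (dg : Fin n → ℕ),
        (∀ i, a i ∈ 𝒜 (dg i)) → (∀ i, dg i ≤ d) →
        SolGenLE k R R 𝒜 a (fun i => (dg i : ℤ)) (2 * (d : ℤ))) :
    ∃ d0 : ℕ, ∀ d : ℕ, d0 ≤ d → IsCohFam k R 𝒜 {I : Submodule Rᵐᵒᵖ R | FinGenLE k R 𝒜 I d} := by
  classical
  obtain ⟨d1, hd1⟩ := h2
  obtain ⟨N, hN⟩ := aug_gens 𝒜 h0 hfga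
  refine ⟨max (2 * d1) N, fun d hd => ?_⟩
  have hdN : N ≤ d := le_trans (le_max_right _ _) hd
  have hdd1 : 2 * d1 ≤ d := le_trans (le_max_left _ _) hd
  refine ⟨fun I hI => ⟨finGenLE_fg 𝒜 hI, finGenLE_gradedSub 𝒜 hI⟩,
    finGenLE_bot 𝒜 d, hN d hdN, ?_⟩
  intro I hI hne
  -- minimal generation degree m
  have hex : ∃ mm : ℕ, GenLE k R R (grZ k R 𝒜) I (mm : ℤ) := ⟨d, finGenLE_genLE 𝒜 hI⟩
  set m := Nat.find hex with hmdef
  have hgen : GenLE k R R (grZ k R 𝒜) I (m : ℤ) := Nat.find_spec hex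
  have hmd : m ≤ d := Nat.find_le (finGenLE_genLE 𝒜 hI)
  have hIm : FinGenLE k R 𝒜 I m := finGenLE_of_genLE 𝒜 hlf hgen
  -- a generating set of minimal cardinality with degrees ≤ m
  have hexn : ∃ nn : ℕ, ∃ (x : Fin nn → R) (dx : Fin nn → ℕ), (∀ i, dx i ≤ m) ∧
      (∀ i, x i ∈ 𝒜 (dx i)) ∧ Submodule.span Rᵐᵒᵖ (Set.range x) = I := hIm
  have hpos : 0 < Nat.find hexn := by
    rcases Nat.eq_zero_or_pos (Nat.find hexn) with hzero | hpos
    · exfalso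
      obtain ⟨x, dx, _, _, hxspan⟩ := Nat.find_spec hexn
      apply hne
      rw [← hxspan]
      haveI : IsEmpty (Fin (Nat.find hexn)) := by rw [hzero]; infer_instance
      rw [Set.range_eq_empty, Submodule.span_empty]
    · exact hpos
  set n' := Nat.find hexn - 1 with hn'def
  have hfindeq : Nat.find hexn = n' + 1 := by omega
  have hspec := Nat.find_spec hexn
  rw [hfindeq] at hspec
  obtain ⟨x, dx, hdx, hxmem, hxspan⟩ := hspec
  have hminn : ¬ (∃ (x : Fin n' → R) (dx : Fin n' → ℕ), (∀ i, dx i ≤ m) ∧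
      (∀ i, x i ∈ 𝒜 (dx i)) ∧ Submodule.span Rᵐᵒᵖ (Set.range x) = I) :=
    Nat.find_min hexn (by omega)
  -- generator of maximal degree
  obtain ⟨i₀, hi₀⟩ := Finite.exists_max dx
  have hdxi₀ : dx i₀ = m := by
    refine le_antisymm (hdx i₀) ?_
    by_contra hlt
    push_neg at hlt
    have hm1 : 1 ≤ m := by omega
    have : GenLE k R R (grZ k R 𝒜) I ((m - 1 : ℕ) : ℤ) :=
      finGenLE_genLE 𝒜 ⟨n' + 1, x, dx, fun i => by have := hi₀ i; omega, hxmem, hxspan⟩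
    exact Nat.find_min hex (show m - 1 < m by omega) this
  set xr : Fin n' → R := x ∘ i₀.succAbove with hxr
  set dxr : Fin n' → ℕ := dx ∘ i₀.succAbove with hdxr
  set J : Submodule Rᵐᵒᵖ R := Submodule.span Rᵐᵒᵖ (Set.range xr) with hJ
  have hJfgm : ∀ c : ℕ, m ≤ c → FinGenLE k R 𝒜 J c :=
    fun c hc => ⟨n', xr, dxr, fun i => le_trans (hdx _) hc, fun i => hxmem _, rfl⟩
  have hJI : I = J ⊔ Submodule.span Rᵐᵒᵖ {x i₀} := by
    rw [← hxspan]
    have hrange : Set.range x = Set.range xr ∪ {x i₀} := by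
      ext y
      constructor
      · rintro ⟨i, rfl⟩
        rcases eq_or_ne i i₀ with rfl | hne'
        · right; rfl
        · obtain ⟨j, hj⟩ := Fin.exists_succAbove_eq hne'
          left; exact ⟨j, by simp only [hxr, Function.comp_apply, hj]⟩
      · rintro (⟨j, rfl⟩ | rfl)
        · exact ⟨i₀.succAbove j, rfl⟩
        · exact ⟨i₀, rfl⟩
    rw [hrange, Submodule.span_union]
  have hJne : J ≠ I := by
    intro hJe
    exact hminn ⟨xr, dxr, fun i => hdx _, fun i => hxmem _, hJe⟩
  refine ⟨J, hJfgm d hmd, hJne, x i₀, ⟨dx i₀, hxmem i₀⟩, ?_, hJI, ?_, ?_⟩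
  · rw [← hxspan]
    exact Submodule.subset_span (Set.mem_range_self i₀)
  · -- degree transfer
    intro dI hdI
    rcases lt_or_ge dI 0 with hneg | hposI
    · exact absurd (genLE_bot_of_neg 𝒜 hneg hdI) hne
    have hmle : (m : ℤ) ≤ dI := by
      by_contra hlt
      push_neg at hlt
      have hcast : ((dI.toNat : ℕ) : ℤ) = dI := Int.toNat_of_nonneg hposI
      have : GenLE k R R (grZ k R 𝒜) I ((dI.toNat : ℕ) : ℤ) := by rwa [hcast]
      exact Nat.find_min hex (show dI.toNat < m by omega) this
    exact genLE_mono (grZ k R 𝒜) hmle (finGenLE_genLE 𝒜 (hJfgm m le_rfl))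
  · -- the colon ideal is in the family
    set d' := max m d1 with hd'
    have hsol := hd1 d' (le_max_right _ _) (n' + 1) (Fin.snoc xr (x i₀)) (Fin.snoc dxr m)
      (fun i => by
        induction i using Fin.lastCases with
        | last => simpa using hdxi₀ ▸ hxmem i₀
        | cast i => simpa [hxr, hdxr] using hxmem _)
      (fun i => by
        induction i using Fin.lastCases with
        | last => simp only [Fin.snoc_last]; exact le_max_left m d1
        | cast i => simp only [Fin.snoc_castSucc]; exact le_trans (hdx _) (le_max_left m d1))
    have hsolG : solGenG 𝒜 (Fin.snoc xr (x i₀))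
        (Fin.snoc (fun i => (dxr i : ℤ)) (m : ℤ)) (2 * (d' : ℤ)) := by
      have := (solGenLE_iff_solGenG 𝒜 _ _ _).mp hsol
      rwa [snoc_cast_eq] at this
    have hcol := colon_le_span_homog 𝒜 xr dxr (x i₀) m (2 * (d' : ℤ)) hsolG
    have hcast : (2 * (d' : ℤ) - (m : ℤ)) = ((2 * d' - m : ℕ) : ℤ) := by
      have : m ≤ d' := le_max_left m d1
      omega
    rw [hcast] at hcol
    have hcfg : FinGenLE k R 𝒜 (colon R (x i₀) J) (2 * d' - m) :=
      finGenLE_of_genLE 𝒜 hlf hcol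
    have hbound : 2 * d' - m ≤ d := by
      rcases le_total d1 m with hc | hc
      · rw [hd', max_eq_left hc]; omega
      · rw [hd', max_eq_right hc]; omega
    exact finGenLE_mono 𝒜 hbound hcfg


/-- the measure used for the well-founded induction: total dimension in degrees `≤ d` -/
noncomputable def msr (d : ℕ) (I : Submodule Rᵐᵒᵖ R) : ℕ :=
  ∑ j ∈ Finset.range (d + 1), Module.finrank k ↥(𝒜 j ⊓ I.restrictScalars k)

lemma msr_lt (hlf : LocFin k R 𝒜) {d : ℕ} {I J : Submodule Rᵐᵒᵖ R}
    (hI : FinGenLE k R 𝒜 I d) (hJI : J ≤ I) (hne : J ≠ I) :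
    msr 𝒜 d J < msr 𝒜 d I := by
  classical
  have hfd : ∀ j : ℕ, FiniteDimensional k ↥(𝒜 j ⊓ I.restrictScalars k) := by
    intro j
    haveI := hlf j
    exact Submodule.finiteDimensional_of_le inf_le_left
  have hmono : ∀ j : ℕ, 𝒜 j ⊓ J.restrictScalars k ≤ 𝒜 j ⊓ I.restrictScalars k :=
    fun j => inf_le_inf_left _ (fun y hy => hJI hy)
  have hle : ∀ j ∈ Finset.range (d + 1),
      Module.finrank k ↥(𝒜 j ⊓ J.restrictScalars k) ≤
        Module.finrank k ↥(𝒜 j ⊓ I.restrictScalars k) := by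
    intro j _
    haveI := hfd j
    exact Submodule.finrank_mono (hmono j)
  have hstrict : ∃ j ∈ Finset.range (d + 1),
      Module.finrank k ↥(𝒜 j ⊓ J.restrictScalars k) <
        Module.finrank k ↥(𝒜 j ⊓ I.restrictScalars k) := by
    by_contra hcon
    push_neg at hcon
    have heq : ∀ j ∈ Finset.range (d + 1),
        (𝒜 j ⊓ J.restrictScalars k) = (𝒜 j ⊓ I.restrictScalars k) := by
      intro j hj
      haveI := hfd j
      exact Submodule.eq_of_le_of_finrank_le (hmono j) (hcon j hj)
    apply hne
    refine le_antisymm hJI ?_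
    refine le_trans (finGenLE_genLE 𝒜 hI) (Submodule.span_le.mpr ?_)
    rintro y ⟨hyI, j, hjle, hyj⟩
    rcases lt_or_ge j 0 with hneg | hpos
    · rw [grZ_neg' 𝒜 hneg] at hyj
      simp only [Submodule.mem_bot] at hyj
      rw [hyj]; exact Submodule.zero_mem _
    · rw [grZ_nonneg 𝒜 hpos] at hyj
      have : y ∈ 𝒜 j.toNat ⊓ I.restrictScalars k := ⟨hyj, hyI⟩
      rw [← heq j.toNat (Finset.mem_range.mpr (by omega))] at this
      exact this.2
  obtain ⟨j0, hj0, hj0lt⟩ := hstrict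
  exact Finset.sum_lt_sum hle ⟨j0, hj0, hj0lt⟩

/-- homogeneous representation of a homogeneous element of a span -/
lemma homog_repr {q : ℕ} (g : Fin q → R) (dgs : Fin q → ℕ) (hg : ∀ j, g j ∈ 𝒜 (dgs j))
    {y : R} {u : ℤ} (hy : y ∈ grZ k R 𝒜 u)
    (hmem : y ∈ Submodule.span Rᵐᵒᵖ (Set.range g)) :
    ∃ p : Fin q → R, (∀ j, p j ∈ grZ k R 𝒜 (u - dgs j)) ∧ ∑ j, g j * p j = y := by
  obtain ⟨b, hb⟩ := (Submodule.mem_span_range_iff_exists_fun Rᵐᵒᵖ).mp hmem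
  have hb' : ∑ j, g j * (b j).unop = y := by
    rw [← hb]; exact Finset.sum_congr rfl fun j _ => rfl
  refine ⟨fun j => pcz 𝒜 (u - dgs j) (b j).unop, fun j => pcz_mem 𝒜 _ _, ?_⟩
  rcases lt_or_ge u 0 with hneg | hpos
  · have hy0 : y = 0 := by
      rw [grZ_neg' 𝒜 hneg] at hy
      simpa using hy
    have hz : ∀ j : Fin q, pcz 𝒜 (u - dgs j) (b j).unop = 0 := by
      intro j
      unfold pcz
      rw [if_neg (by omega)]
    rw [hy0]
    exact Finset.sum_eq_zero fun j _ => by simp only [hz j, mul_zero]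
  · have hcast : ((u.toNat : ℕ) : ℤ) = u := Int.toNat_of_nonneg hpos
    have hysame : pc 𝒜 u.toNat y = y := by
      apply pc_of_mem_same
      rwa [grZ_nonneg 𝒜 hpos] at hy
    calc ∑ j, g j * pcz 𝒜 (u - dgs j) (b j).unop
        = ∑ j, pc 𝒜 u.toNat (g j * (b j).unop) := by
          refine Finset.sum_congr rfl fun j _ => ?_
          rw [pc_grZ_mul_left 𝒜 (mem_grZ_of_mem 𝒜 (hg j)), hcast]
      _ = pc 𝒜 u.toNat (∑ j, g j * (b j).unop) := (pc_sum 𝒜 _ _ _).symm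
      _ = y := by rw [hb', hysame]

/-- lifting a homogeneous element of a colon ideal to a homogeneous solution -/
lemma lift_colon {q : ℕ} (g : Fin q → R) (dgs : Fin q → ℕ) (hg : ∀ j, g j ∈ 𝒜 (dgs j))
    {x : R} {e : ℕ} (hx : x ∈ 𝒜 e) {c : R} {u : ℤ} (hc : c ∈ grZ k R 𝒜 u)
    (hcol : x * c ∈ Submodule.span Rᵐᵒᵖ (Set.range g)) :
    ∃ w : Fin (q + 1) → R,
      isSolG (Fin.snoc g x) w ∧ w (Fin.last q) = c ∧
      homogG 𝒜 (Fin.snoc (fun j => (dgs j : ℤ)) (e : ℤ)) w (u + e) := by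
  have hxc : x * c ∈ grZ k R 𝒜 ((e : ℤ) + u) := grZ_mul 𝒜 (mem_grZ_of_mem 𝒜 hx) hc
  rw [show (e : ℤ) + u = u + e by ring] at hxc
  obtain ⟨p, hphom, hpsum⟩ := homog_repr 𝒜 g dgs hg hxc hcol
  refine ⟨Fin.snoc (fun j => -(p j)) c, ?_, by simp, ?_⟩
  · unfold isSolG
    rw [Fin.sum_univ_castSucc]
    simp only [Fin.snoc_castSucc, Fin.snoc_last]
    have : ∑ i : Fin q, g i * -(p i) = -(x * c) := by
      rw [← hpsum, ← Finset.sum_neg_distrib]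
      exact Finset.sum_congr rfl fun j _ => (mul_neg _ _)
    rw [this, neg_add_cancel]
  · intro i
    induction i using Fin.lastCases with
    | last =>
      simp only [Fin.snoc_last]
      have : u + (e : ℤ) - (e : ℤ) = u := by ring
      rw [this]
      exact hc
    | cast j =>
      simp only [Fin.snoc_castSucc]
      exact Submodule.neg_mem _ (hphom j)

/-- extension by zero along `Fin.snoc` as a linear map -/
def snocZeroL (q : ℕ) : (Fin q → R) →ₗ[Rᵐᵒᵖ] (Fin (q + 1) → R) where
  toFun u := Fin.snoc u 0
  map_add' u v := by
    funext i
    induction i using Fin.lastCases with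
    | last => simp
    | cast j => simp
  map_smul' r u := by
    funext i
    induction i using Fin.lastCases with
    | last => simp
    | cast j => simp

/-- extension by zero to a sum type as a linear map -/
def inrZeroL (α β : Type) [Fintype α] [Fintype β] : (β → R) →ₗ[Rᵐᵒᵖ] (α ⊕ β → R) where
  toFun w := Sum.elim 0 w
  map_add' u v := by
    funext z
    cases z <;> simp
  map_smul' r u := by
    funext z
    cases z <;> simp


/-- every ideal in a coherent family of degree `≤ d` has a homogeneous generating
set in degrees `≤ d` whose solution module is generated in degrees `≤ 2d` -/
lemma goodGens (hlf : LocFin k R 𝒜) {d : ℕ}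
    (hF : IsCohFam k R 𝒜 {I : Submodule Rᵐᵒᵖ R | FinGenLE k R 𝒜 I d}) :
    ∀ I : Submodule Rᵐᵒᵖ R, FinGenLE k R 𝒜 I d →
      ∃ (q : ℕ) (g : Fin q → R) (dgs : Fin q → ℕ),
        (∀ j, dgs j ≤ d) ∧ (∀ j, g j ∈ 𝒜 (dgs j)) ∧
        Submodule.span Rᵐᵒᵖ (Set.range g) = I ∧
        solGenG 𝒜 g (fun j => (dgs j : ℤ)) (2 * (d : ℤ)) := by
  classical
  suffices H : ∀ E : ℕ, ∀ I : Submodule Rᵐᵒᵖ R, msr 𝒜 d I = E → FinGenLE k R 𝒜 I d →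
      ∃ (q : ℕ) (g : Fin q → R) (dgs : Fin q → ℕ),
        (∀ j, dgs j ≤ d) ∧ (∀ j, g j ∈ 𝒜 (dgs j)) ∧
        Submodule.span Rᵐᵒᵖ (Set.range g) = I ∧
        solGenG 𝒜 g (fun j => (dgs j : ℤ)) (2 * (d : ℤ)) by
    intro I hI
    exact H (msr 𝒜 d I) I rfl hI
  intro E
  induction E using Nat.strong_induction_on with
  | _ E IH =>
  intro I hE hI
  by_cases hbot : I = ⊥
  · subst hbot
    refine ⟨0, Fin.elim0, Fin.elim0, fun j => j.elim0, fun j => j.elim0, ?_, ?_⟩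
    · rw [Set.range_eq_empty, Submodule.span_empty]
    · intro v _
      have hv0 : v = 0 := funext fun i => i.elim0
      rw [hv0]
      exact Submodule.zero_mem _
  · obtain ⟨J, hJF, hJne, x, ⟨e, hxe⟩, hxI, hIJx, htrans, hcolF⟩ := hF.2.2.2 I hI hbot
    have hJle : J ≤ I := by rw [hIJx]; exact le_sup_left
    have hJfg : FinGenLE k R 𝒜 J d := hJF
    have hed : e ≤ d := by
      by_contra hgt
      push_neg at hgt
      apply hJne
      refine le_antisymm hJle ?_
      refine le_trans (finGenLE_genLE 𝒜 hI) (Submodule.span_le.mpr ?_)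
      rintro y ⟨hyI, j, hjle, hyj⟩
      rcases lt_or_ge j 0 with hneg | hpos
      · rw [grZ_neg' 𝒜 hneg] at hyj
        simp only [Submodule.mem_bot] at hyj
        rw [hyj]; exact J.zero_mem
      · rw [grZ_nonneg 𝒜 hpos] at hyj
        have hyI' := hyI
        rw [hIJx] at hyI'
        obtain ⟨w, hw, z, hz, rfl⟩ := Submodule.mem_sup.mp hyI'
        obtain ⟨r, rfl⟩ := Submodule.mem_span_singleton.mp hz
        have hself : pc 𝒜 j.toNat (w + r • x) = w + r • x := pc_of_mem_same 𝒜 hyj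
        have hxr : pc 𝒜 j.toNat (r • x) = 0 := by
          have hrx : (r • x : R) = x * r.unop := rfl
          rw [hrx, pc_mul_left 𝒜 hxe, if_neg (by omega)]
        rw [pc_add, hxr, add_zero] at hself
        rw [← hself]
        exact pc_mem_of_finGenLE 𝒜 hJfg hw _
    -- induction applied to J
    have hmsr : msr 𝒜 d J < E := hE ▸ msr_lt 𝒜 hlf hI hJle hJne
    obtain ⟨q, g, dgs, hdgs, hgmem, hgspan, hgsol⟩ := IH _ hmsr J rfl hJfg
    refine ⟨q + 1, Fin.snoc g x, Fin.snoc dgs e, ?_, ?_, ?_, ?_⟩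
    · intro j
      induction j using Fin.lastCases with
      | last => simpa using hed
      | cast j => simpa using hdgs j
    · intro j
      induction j using Fin.lastCases with
      | last => simpa using hxe
      | cast j => simpa using hgmem j
    · rw [span_range_snoc, hgspan]
      exact hIJx.symm
    · rw [snoc_cast_eq dgs e]
      intro v hv
      set r0 := v (Fin.last q) with hr0
      have hsolv : ∑ i : Fin q, g i * v i.castSucc + x * r0 = 0 := by
        have hv' := hv
        unfold isSolG at hv'
        rw [Fin.sum_univ_castSucc] at hv'
        simpa [Fin.snoc_castSucc, Fin.snoc_last] using hv'
      have hxr0 : x * r0 ∈ J := by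
        have h1 : x * r0 = -∑ i : Fin q, g i * v i.castSucc :=
          eq_neg_of_add_eq_zero_right hsolv
        rw [h1]
        exact Submodule.neg_mem _ (Submodule.sum_mem _ fun i _ =>
          mul_right_mem (hgspan ▸ Submodule.subset_span (Set.mem_range_self i)) _)
      have hr0col : r0 ∈ colon R x J := hxr0
      have hcolgen : colon R x J ≤ Submodule.span Rᵐᵒᵖ
          {y : R | y ∈ colon R x J ∧ ∃ jj ≤ (d : ℤ), y ∈ grZ k R 𝒜 jj} :=
        finGenLE_genLE 𝒜 hcolF
      obtain ⟨t, fc, ge, hsum⟩ := Submodule.mem_span_set'.mp (hcolgen hr0col)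
      have hlift : ∀ l : Fin t, ∃ w : Fin (q+1) → R,
          isSolG (Fin.snoc g x) w ∧ w (Fin.last q) = (ge l : R) ∧
          ∃ jj, jj ≤ 2 * (d : ℤ) ∧
            homogG 𝒜 (Fin.snoc (fun j => (dgs j : ℤ)) (e : ℤ)) w jj := by
        intro l
        obtain ⟨hcol_l, u, hu, hhom⟩ := (ge l).2
        have hxc : x * (ge l : R) ∈ Submodule.span Rᵐᵒᵖ (Set.range g) := by
          rw [hgspan]; exact hcol_l
        obtain ⟨w, hw1, hw2, hw3⟩ := lift_colon 𝒜 g dgs hgmem hxe hhom hxc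
        exact ⟨w, hw1, hw2, u + e, by omega, hw3⟩
      choose w hw1 hw2 jj hjjle hw3 using hlift
      set v' : Fin (q+1) → R := v - ∑ l, fc l • w l with hv'
      have hv'sol : isSolG (Fin.snoc g x) v' := by
        rw [isSolG_iff_solMap] at hv ⊢
        rw [hv', map_sub, map_sum, hv, zero_sub, neg_eq_zero]
        refine Finset.sum_eq_zero fun l _ => ?_
        rw [map_smul, (isSolG_iff_solMap _ _).mp (hw1 l), smul_zero]
      have hv'last : v' (Fin.last q) = 0 := by
        have hsummand : (∑ l, fc l • w l) (Fin.last q) = ∑ l, fc l • (ge l : R) := by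
          rw [Finset.sum_apply]
          refine Finset.sum_congr rfl fun l _ => ?_
          rw [Pi.smul_apply, hw2 l]
        rw [hv', Pi.sub_apply, hsummand, hsum, sub_self]
      set vr : Fin q → R := fun j => v' j.castSucc with hvr
      have hvrsol : isSolG g vr := by
        have h2 := hv'sol
        unfold isSolG at h2 ⊢
        rw [Fin.sum_univ_castSucc] at h2
        simpa [Fin.snoc_castSucc, Fin.snoc_last, hv'last] using h2
      have hvrspan := hgsol vr hvrsol
      have hv'eq : v' = snocZeroL q vr := by
        funext i
        induction i using Fin.lastCases with
        | last => rw [hv'last]; simp [snocZeroL]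
        | cast j => simp [snocZeroL, hvr]
      have hv'mem : v' ∈ Submodule.span Rᵐᵒᵖ
          (solSet 𝒜 (Fin.snoc g x) (Fin.snoc (fun j => (dgs j : ℤ)) (e : ℤ)) (2 * (d : ℤ))) := by
        rw [hv'eq]
        have h1 : snocZeroL q vr ∈ Submodule.map (snocZeroL (R := R) q)
            (Submodule.span Rᵐᵒᵖ (solSet 𝒜 g (fun j => (dgs j : ℤ)) (2 * (d : ℤ)))) :=
          Submodule.mem_map_of_mem hvrspan
        rw [Submodule.map_span] at h1
        refine Submodule.span_mono ?_ h1
        rintro _ ⟨w0, ⟨hw0sol, jj0, hjj0le, hw0hom⟩, rfl⟩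
        refine ⟨?_, jj0, hjj0le, ?_⟩
        · unfold isSolG
          rw [Fin.sum_univ_castSucc]
          have hz : (snocZeroL (R := R) q w0) (Fin.last q) = 0 := by simp [snocZeroL]
          have hc : ∀ i : Fin q, (snocZeroL (R := R) q w0) i.castSucc = w0 i := by
            intro i; simp [snocZeroL]
          simp only [Fin.snoc_castSucc, Fin.snoc_last, hz, hc, mul_zero, add_zero]
          exact hw0sol
        · intro i
          induction i using Fin.lastCases with
          | last =>
            have hz : (snocZeroL (R := R) q w0) (Fin.last q) = 0 := by simp [snocZeroL]
            rw [hz]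
            exact Submodule.zero_mem _
          | cast j =>
            have hc : (snocZeroL (R := R) q w0) j.castSucc = w0 j := by simp [snocZeroL]
            rw [hc, Fin.snoc_castSucc]
            exact hw0hom j
      have hfinal : v = v' + ∑ l, fc l • w l := by
        rw [hv']
        abel
      rw [hfinal]
      refine Submodule.add_mem _ hv'mem (Submodule.sum_mem _ fun l _ =>
        Submodule.smul_mem _ _ ?_)
      exact Submodule.subset_span ⟨hw1 l, jj l, hjjle l, hw3 l⟩


/-- coherent family of degree `≤ d` implies all solution modules of equations with
coefficients in degrees `≤ d` are generated in degrees `≤ 2d` -/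
lemma cohFam_solGen (hlf : LocFin k R 𝒜) {d : ℕ}
    (hF : IsCohFam k R 𝒜 {I : Submodule Rᵐᵒᵖ R | FinGenLE k R 𝒜 I d})
    (n : ℕ) (a : Fin n → R) (dg : Fin n → ℕ)
    (hmem : ∀ i, a i ∈ 𝒜 (dg i)) (hdg : ∀ i, dg i ≤ d) :
    solGenG 𝒜 a (fun i => (dg i : ℤ)) (2 * (d : ℤ)) := by
  classical
  set I : Submodule Rᵐᵒᵖ R := Submodule.span Rᵐᵒᵖ (Set.range a) with hIdef
  have hIfg : FinGenLE k R 𝒜 I d := ⟨n, a, dg, hdg, hmem, rfl⟩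
  obtain ⟨q, g, dgs, hdgs, hgmem, hgspan, hgsol⟩ := goodGens 𝒜 hlf hF I hIfg
  set ac : Fin n ⊕ Fin q → R := Sum.elim a g with hac
  set dgc : Fin n ⊕ Fin q → ℤ := Sum.elim (fun i => (dg i : ℤ)) (fun j => (dgs j : ℤ)) with hdgc
  -- homogeneous representation of g in terms of a
  have hga : ∀ j, ∃ p : Fin n → R, (∀ i, p i ∈ grZ k R 𝒜 ((dgs j : ℤ) - dg i)) ∧
      ∑ i, a i * p i = g j := by
    intro j
    refine homog_repr 𝒜 a dg hmem (mem_grZ_of_mem 𝒜 (hgmem j)) ?_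
    rw [← hIdef, ← hgspan]
    exact Submodule.subset_span (Set.mem_range_self j)
  choose p hp hpsum using hga
  -- homogeneous representation of a in terms of g
  have hag : ∀ i, ∃ pp : Fin q → R, (∀ j, pp j ∈ grZ k R 𝒜 ((dg i : ℤ) - dgs j)) ∧
      ∑ j, g j * pp j = a i := by
    intro i
    refine homog_repr 𝒜 g dgs hgmem (mem_grZ_of_mem 𝒜 (hmem i)) ?_
    rw [hgspan, hIdef]
    exact Submodule.subset_span (Set.mem_range_self i)
  choose pp hpp hppsum using hag
  -- the trivial solutions coming from the redundancy of `a`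
  set τ : Fin n → (Fin n ⊕ Fin q → R) :=
    fun i => Sum.elim (fun i' => if i' = i then (1 : R) else 0) (fun j => -(pp i j)) with hτ
  have hτsol : ∀ i, isSolG ac (τ i) := by
    intro i
    unfold isSolG
    rw [Fintype.sum_sum_type]
    have h1 : ∑ i' : Fin n, ac (Sum.inl i') * τ i (Sum.inl i') = a i := by
      have : ∀ i' : Fin n, ac (Sum.inl i') * τ i (Sum.inl i') =
          if i' = i then a i' else 0 := by
        intro i'
        simp only [hac, hτ, Sum.elim_inl]
        split_ifs with h
        · rw [mul_one]
        · rw [mul_zero]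
      rw [Finset.sum_congr rfl fun i' _ => this i']
      rw [Finset.sum_ite_eq' Finset.univ i (fun i' => a i')]
      simp
    have h2 : ∑ j : Fin q, ac (Sum.inr j) * τ i (Sum.inr j) = -(a i) := by
      have : ∀ j : Fin q, ac (Sum.inr j) * τ i (Sum.inr j) = -(g j * pp i j) := by
        intro j
        simp only [hac, hτ, Sum.elim_inr, mul_neg]
      rw [Finset.sum_congr rfl fun j _ => this j, Finset.sum_neg_distrib, hppsum i]
    rw [h1, h2, add_neg_cancel]
  have hτhom : ∀ i, homogG 𝒜 dgc (τ i) (dg i) := by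
    intro i z
    cases z with
    | inl i' =>
      simp only [hτ, Sum.elim_inl, hdgc]
      split_ifs with h
      · subst h
        have h0 : (dg i' : ℤ) - (dg i' : ℤ) = ((0 : ℕ) : ℤ) := by ring
        rw [h0, grZ_natCast]
        exact SetLike.one_mem_graded 𝒜
      · exact Submodule.zero_mem _
    | inr j =>
      simp only [hτ, Sum.elim_inr, hdgc]
      exact Submodule.neg_mem _ (hpp i j)
  -- solution generation for the combined list
  have hcsol : solGenG 𝒜 ac dgc (2 * (d : ℤ)) := by
    intro v hv
    set v1 : Fin n ⊕ Fin q → R := v - ∑ i, (op (v (Sum.inl i))) • τ i with hv1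
    have hv1inl : ∀ i', v1 (Sum.inl i') = 0 := by
      intro i'
      have hsummand : (∑ i, (op (v (Sum.inl i))) • τ i) (Sum.inl i') = v (Sum.inl i') := by
        rw [Finset.sum_apply]
        have : ∀ i, ((op (v (Sum.inl i))) • τ i) (Sum.inl i') =
            if i' = i then v (Sum.inl i) else 0 := by
          intro i
          have : ((op (v (Sum.inl i))) • τ i) (Sum.inl i') =
              τ i (Sum.inl i') * v (Sum.inl i) := rfl
          rw [this]
          simp only [hτ, Sum.elim_inl]
          split_ifs with h
          · rw [one_mul]
          · rw [zero_mul]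
        rw [Finset.sum_congr rfl fun i _ => this i]
        rw [Finset.sum_ite_eq Finset.univ i' (fun i => v (Sum.inl i))]
        simp
      rw [hv1, Pi.sub_apply, hsummand, sub_self]
    have hv1sol : isSolG ac v1 := by
      rw [isSolG_iff_solMap] at hv ⊢
      rw [hv1, map_sub, map_sum, hv, zero_sub, neg_eq_zero]
      refine Finset.sum_eq_zero fun i _ => ?_
      rw [map_smul, (isSolG_iff_solMap _ _).mp (hτsol i), smul_zero]
    set v1r : Fin q → R := fun j => v1 (Sum.inr j) with hv1r
    have hv1rsol : isSolG g v1r := by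
      have h2 := hv1sol
      unfold isSolG at h2 ⊢
      rw [Fintype.sum_sum_type] at h2
      have hzero : ∑ i' : Fin n, ac (Sum.inl i') * v1 (Sum.inl i') = 0 :=
        Finset.sum_eq_zero fun i' _ => by rw [hv1inl i', mul_zero]
      rw [hzero, zero_add] at h2
      exact h2
    have hv1rspan := hgsol v1r hv1rsol
    have hv1eq : v1 = inrZeroL (Fin n) (Fin q) v1r := by
      funext z
      cases z with
      | inl i' => rw [hv1inl i']; rfl
      | inr j => rfl
    have hv1mem : v1 ∈ Submodule.span Rᵐᵒᵖ (solSet 𝒜 ac dgc (2 * (d : ℤ))) := by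
      rw [hv1eq]
      have h1 : inrZeroL (Fin n) (Fin q) v1r ∈
          Submodule.map (inrZeroL (R := R) (Fin n) (Fin q))
            (Submodule.span Rᵐᵒᵖ (solSet 𝒜 g (fun j => (dgs j : ℤ)) (2 * (d : ℤ)))) :=
        Submodule.mem_map_of_mem hv1rspan
      rw [Submodule.map_span] at h1
      refine Submodule.span_mono ?_ h1
      rintro _ ⟨w0, ⟨hw0sol, jj0, hjj0le, hw0hom⟩, rfl⟩
      refine ⟨?_, jj0, hjj0le, ?_⟩
      · unfold isSolG
        rw [Fintype.sum_sum_type]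
        have hzero : ∑ i' : Fin n, ac (Sum.inl i') *
            (inrZeroL (R := R) (Fin n) (Fin q) w0) (Sum.inl i') = 0 :=
          Finset.sum_eq_zero fun i' _ => by
            have : (inrZeroL (R := R) (Fin n) (Fin q) w0) (Sum.inl i') = 0 := rfl
            rw [this, mul_zero]
        rw [hzero, zero_add]
        exact hw0sol
      · intro z
        cases z with
        | inl i' => exact Submodule.zero_mem _
        | inr j => exact hw0hom j
    have hfinal : v = v1 + ∑ i, (op (v (Sum.inl i))) • τ i := by
      rw [hv1]; abel
    rw [hfinal]
    refine Submodule.add_mem _ hv1mem (Submodule.sum_mem _ fun i _ =>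
      Submodule.smul_mem _ _ ?_)
    refine Submodule.subset_span ⟨hτsol i, (dg i : ℤ), ?_, hτhom i⟩
    have := hdg i
    omega
  -- now transfer back to the original list `a`
  intro v hv
  set vext : Fin n ⊕ Fin q → R := Sum.elim v 0 with hvext
  have hvextsol : isSolG ac vext := by
    unfold isSolG
    rw [Fintype.sum_sum_type]
    have h1 : ∑ i : Fin n, ac (Sum.inl i) * vext (Sum.inl i) = 0 := hv
    have h2 : ∑ j : Fin q, ac (Sum.inr j) * vext (Sum.inr j) = 0 :=
      Finset.sum_eq_zero fun j _ => by
        have : vext (Sum.inr j) = 0 := rfl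
        rw [this, mul_zero]
    rw [h1, h2, add_zero]
  obtain ⟨t, fc, me, hsum⟩ := Submodule.mem_span_set'.mp (hcsol vext hvextsol)
  have hsum' : ∀ z, ∑ l, (me l : Fin n ⊕ Fin q → R) z * (fc l).unop = vext z := by
    intro z
    have := congrFun hsum z
    rw [Finset.sum_apply] at this
    exact this
  set ν : Fin t → (Fin n → R) :=
    fun l i => (me l : Fin n ⊕ Fin q → R) (Sum.inl i) +
      ∑ j, p j i * (me l : Fin n ⊕ Fin q → R) (Sum.inr j) with hν
  have hνsol : ∀ l, isSolG a (ν l) := by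
    intro l
    unfold isSolG
    have hstep : ∀ i, a i * ν l i = a i * (me l : Fin n ⊕ Fin q → R) (Sum.inl i) +
        ∑ j, (a i * p j i) * (me l : Fin n ⊕ Fin q → R) (Sum.inr j) := by
      intro i
      rw [hν]
      simp only []
      rw [mul_add, Finset.mul_sum]
      congr 1
      exact Finset.sum_congr rfl fun j _ => (mul_assoc _ _ _).symm
    rw [Finset.sum_congr rfl fun i _ => hstep i, Finset.sum_add_distrib]
    rw [Finset.sum_comm]
    have h2 : ∑ j, ∑ i, (a i * p j i) * (me l : Fin n ⊕ Fin q → R) (Sum.inr j) =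
        ∑ j, g j * (me l : Fin n ⊕ Fin q → R) (Sum.inr j) := by
      refine Finset.sum_congr rfl fun j _ => ?_
      rw [← Finset.sum_mul, hpsum j]
    rw [h2]
    have h3 := (me l).2.1
    unfold isSolG at h3
    rw [Fintype.sum_sum_type] at h3
    exact h3
  have hνhom : ∀ l, ∃ jj ≤ 2 * (d : ℤ), homogG 𝒜 (fun i => (dg i : ℤ)) (ν l) jj := by
    intro l
    obtain ⟨_, jj, hjjle, hhom⟩ := (me l).2
    refine ⟨jj, hjjle, fun i => ?_⟩
    rw [hν]
    simp only []
    refine Submodule.add_mem _ (hhom (Sum.inl i)) (Submodule.sum_mem _ fun j _ => ?_)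
    have hmul := grZ_mul 𝒜 (hp j i) (hhom (Sum.inr j))
    have heq : ((dgs j : ℤ) - dg i) + (jj - dgc (Sum.inr j)) = jj - dg i := by
      simp only [hdgc, Sum.elim_inr]
      ring
    rw [heq] at hmul
    exact hmul
  have hfinal : v = ∑ l, fc l • ν l := by
    funext i
    rw [Finset.sum_apply]
    have hcoord : ∀ l, (fc l • ν l) i = ν l i * (fc l).unop := fun l => rfl
    rw [Finset.sum_congr rfl fun l _ => hcoord l]
    have hexpand : ∀ l, ν l i * (fc l).unop =
        (me l : Fin n ⊕ Fin q → R) (Sum.inl i) * (fc l).unop +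
          ∑ j, p j i * ((me l : Fin n ⊕ Fin q → R) (Sum.inr j) * (fc l).unop) := by
      intro l
      rw [hν]
      simp only []
      rw [add_mul, Finset.sum_mul]
      congr 1
      exact Finset.sum_congr rfl fun j _ => mul_assoc _ _ _
    rw [Finset.sum_congr rfl fun l _ => hexpand l, Finset.sum_add_distrib]
    rw [hsum' (Sum.inl i)]
    rw [Finset.sum_comm]
    have h4 : ∑ j, ∑ l, p j i * ((me l : Fin n ⊕ Fin q → R) (Sum.inr j) * (fc l).unop) =
        ∑ j : Fin q, (0 : R) := by
      refine Finset.sum_congr rfl fun j _ => ?_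
      rw [← Finset.mul_sum, hsum' (Sum.inr j)]
      have : vext (Sum.inr j) = 0 := rfl
      rw [this, mul_zero]
    rw [h4]
    have : vext (Sum.inl i) = v i := rfl
    rw [this]
    simp
  rw [hfinal]
  refine Submodule.sum_mem _ fun l _ => Submodule.smul_mem _ _ ?_
  obtain ⟨jj, hjjle, hhom⟩ := hνhom l
  exact Submodule.subset_span ⟨hνsol l, jj, hjjle, hhom⟩


/-- adjusting the degree labels of the coefficients from `ℤ` to `ℕ` -/
lemma solGenG_toNat {n : ℕ} (a : Fin n → R) (dg : Fin n → ℤ) (D : ℤ)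
    (hD : ∀ i, dg i ≤ D) (hmem : ∀ i, a i ∈ grZ k R 𝒜 (dg i))
    (h : solGenG 𝒜 a (fun i => ((dg i).toNat : ℤ)) D) :
    solGenG 𝒜 a dg D := by
  classical
  intro v hv
  refine Submodule.span_le.mpr ?_ (h v hv)
  intro w hw
  obtain ⟨hwsol, j, hjle, hwhom⟩ := hw
  have habad : ∀ i, dg i < 0 → a i = 0 := by
    intro i hi
    have := hmem i
    rw [grZ_neg' 𝒜 hi] at this
    simpa using this
  set wgood : Fin n → R := fun i => if 0 ≤ dg i then w i else 0 with hwgood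
  have hkey : w = wgood + ∑ i ∈ Finset.univ.filter (fun i => dg i < 0),
      (op (w i)) • Pi.single i (1 : R) := by
    funext i'
    rw [Pi.add_apply, Finset.sum_apply]
    have hterm : ∀ i, ((op (w i)) • Pi.single i (1 : R) : Fin n → R) i' =
        if i' = i then w i else 0 := by
      intro i
      have h1 : ((op (w i)) • Pi.single i (1 : R) : Fin n → R) i' =
          (Pi.single i (1 : R) : Fin n → R) i' * w i := rfl
      rw [h1]
      rcases eq_or_ne i' i with rfl | hne
      · rw [Pi.single_eq_same, if_pos rfl, one_mul]
      · rw [Pi.single_eq_of_ne hne, if_neg hne, zero_mul]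
    rw [Finset.sum_congr rfl fun i _ => hterm i]
    rcases le_or_gt 0 (dg i') with hgood | hbad
    · rw [hwgood]
      simp only [if_pos hgood]
      have : ∑ i ∈ Finset.univ.filter (fun i => dg i < 0),
          (if i' = i then w i else 0) = 0 := by
        refine Finset.sum_eq_zero fun i hi => ?_
        rw [if_neg]
        intro hcon
        subst hcon
        exact absurd (Finset.mem_filter.mp hi).2 (by omega)
      rw [this, add_zero]
    · rw [hwgood]
      simp only [if_neg (by omega : ¬ (0:ℤ) ≤ dg i')]
      have hs : ∑ i ∈ Finset.univ.filter (fun i : Fin n => dg i < 0),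
          (if i' = i then w i else 0) = w i' := by
        rw [Finset.sum_ite_eq (Finset.univ.filter (fun i : Fin n => dg i < 0)) i' w]
        exact if_pos (Finset.mem_filter.mpr ⟨Finset.mem_univ i', hbad⟩)
      rw [hs, zero_add]
  rw [hkey]
  refine Submodule.add_mem _ ?_ (Submodule.sum_mem _ fun i hi => ?_)
  · refine Submodule.subset_span ⟨?_, j, hjle, ?_⟩
    · unfold isSolG at hwsol ⊢
      rw [← hwsol]
      refine Finset.sum_congr rfl fun i _ => ?_
      rw [hwgood]
      simp only []
      split_ifs with hgood
      · rfl
      · rw [habad i (by omega), zero_mul, zero_mul]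
    · intro i
      rw [hwgood]
      simp only []
      split_ifs with hgood
      · have hcast : j - (((dg i).toNat : ℕ) : ℤ) = j - dg i := by omega
        rw [← hcast]
        exact hwhom i
      · exact Submodule.zero_mem _
  · have hbad : dg i < 0 := (Finset.mem_filter.mp hi).2
    refine Submodule.smul_mem _ _ (Submodule.subset_span ⟨?_, dg i, le_trans (hD i) le_rfl, ?_⟩)
    · unfold isSolG
      have : ∀ i', a i' * (Pi.single i (1:R) : Fin n → R) i' = if i' = i then a i else 0 := by
        intro i'
        rcases eq_or_ne i' i with rfl | hne
        · rw [Pi.single_eq_same, if_pos rfl, mul_one]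
        · rw [Pi.single_eq_of_ne hne, if_neg hne, mul_zero]
      rw [Finset.sum_congr rfl fun i' _ => this i']
      rw [Finset.sum_ite_eq' Finset.univ i (fun _ => a i)]
      simp [habad i hbad]
    · intro i'
      rcases eq_or_ne i' i with rfl | hne
      · rw [Pi.single_eq_same]
        have h0 : dg i' - dg i' = ((0 : ℕ) : ℤ) := by ring
        rw [h0, grZ_natCast]
        exact SetLike.one_mem_graded 𝒜
      · rw [Pi.single_eq_of_ne hne]
        exact Submodule.zero_mem _

/-- effective coherence from condition (ii) -/
lemma effCoh_of_sol
    (h2 : ∃ d1 : ℕ, ∀ d : ℕ, d1 ≤ d → ∀ (n : ℕ) (a : Fin n → R) (dg : Fin n → ℕ),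
        (∀ i, a i ∈ 𝒜 (dg i)) → (∀ i, dg i ≤ d) →
        SolGenLE k R R 𝒜 a (fun i => (dg i : ℤ)) (2 * (d : ℤ))) :
    EffCohAlg k R 𝒜 := by
  classical
  obtain ⟨d1, hd1⟩ := h2
  refine ⟨fun d => 2 * max d d1, ⟨fun d => by show d ≤ 2 * max d d1; have h := le_max_left d d1; omega, ?_⟩⟩
  intro d n a dg hmem hdgle
  set d' := max d d1 with hd'
  have hmem' : ∀ i, a i ∈ 𝒜 ((dg i).toNat) := by
    intro i
    rcases le_or_gt 0 (dg i) with hgood | hbad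
    · have := hmem i
      rwa [grZ_nonneg 𝒜 hgood] at this
    · have := hmem i
      rw [grZ_neg' 𝒜 hbad] at this
      simp only [Submodule.mem_bot] at this
      rw [this]
      exact Submodule.zero_mem _
  have hdg' : ∀ i, (dg i).toNat ≤ d' := by
    intro i
    have := hdgle i
    omega
  have hs := hd1 d' (le_max_right _ _) n a (fun i => (dg i).toNat) hmem' hdg'
  rw [solGenLE_iff_solGenG] at hs
  have hsol : solGenG 𝒜 a dg (2 * (d' : ℤ)) := by
    refine solGenG_toNat 𝒜 a dg _ (fun i => by have := hdgle i; omega) hmem hs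
  have hcast : (((2 * max d d1 : ℕ) : ℕ) : ℤ) = 2 * (d' : ℤ) := by
    rw [hd']
    push_cast
    ring
  rw [solGenLE_iff_solGenG]
  rw [hcast]
  exact hsol

end SolTools

end Infra18

/-- `R` is universally coherent iff for all sufficiently large `d` the
solution modules of equations with coefficients of degrees at most `d` are generated
in degrees at most `2d`; either condition implies effective coherence. -/
theorem statement_18 (k R : Type) [Field k] [Ring R] [Algebra k R]
    (𝒜 : ℕ → Submodule k R) (hconn : IsConnAlg k R 𝒜) (hlf : LocFin k R 𝒜)
    (hfga : FinGenAlg k R) :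
    ((∃ d0 : ℕ, ∀ d : ℕ, d0 ≤ d →
        IsCohFam k R 𝒜 {I : Submodule Rᵐᵒᵖ R | FinGenLE k R 𝒜 I d}) ↔
      (∃ d1 : ℕ, ∀ d : ℕ, d1 ≤ d →
        ∀ (n : ℕ) (a : Fin n → R) (dg : Fin n → ℕ),
          (∀ i, a i ∈ 𝒜 (dg i)) → (∀ i, dg i ≤ d) →
          SolGenLE k R R 𝒜 a (fun i => (dg i : ℤ)) (2 * (d : ℤ)))) ∧
    ((∃ d0 : ℕ, ∀ d : ℕ, d0 ≤ d →
        IsCohFam k R 𝒜 {I : Submodule Rᵐᵒᵖ R | FinGenLE k R 𝒜 I d}) →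
      EffCohAlg k R 𝒜) := by
  letI : GradedRing 𝒜 := mkGR 𝒜 hconn
  have fwd : (∃ d0 : ℕ, ∀ d : ℕ, d0 ≤ d →
        IsCohFam k R 𝒜 {I : Submodule Rᵐᵒᵖ R | FinGenLE k R 𝒜 I d}) →
      (∃ d1 : ℕ, ∀ d : ℕ, d1 ≤ d →
        ∀ (n : ℕ) (a : Fin n → R) (dg : Fin n → ℕ),
          (∀ i, a i ∈ 𝒜 (dg i)) → (∀ i, dg i ≤ d) →
          SolGenLE k R R 𝒜 a (fun i => (dg i : ℤ)) (2 * (d : ℤ))) := by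
    rintro ⟨d0, h1⟩
    refine ⟨d0, fun d hd n a dg hmem hdg => ?_⟩
    rw [solGenLE_iff_solGenG]
    exact cohFam_solGen 𝒜 hlf (h1 d hd) n a dg hmem hdg
  refine ⟨⟨fwd, fun h2 => dir_2_to_1 𝒜 hconn.2.2 hlf hfga h2⟩, ?_⟩
  intro h1
  exact effCoh_of_sol 𝒜 (fwd h1)

end NCG
end
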